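/- arXiv:2511.10895 — 5 statements merged into one kernel-verified Lean document; each statement's English description precedes it below -/
import Mathlib

section
/- Let t ≥ 3 be an integer. Every t-mansion is (2P_3, C_4, C_6, C_7, T_0)-free and contains an induced t-pentagon. Moreover, every t-mansion is anticonnected and contains no simplicial and no universal vertices. -/
namespace Paper

open SimpleGraph

variable {V : Type} {W : Type}

/-- `G` contains no induced copy of `H` (there is no graph embedding of `H` into `G`). -/
def IndFree (G : SimpleGraph V) (H : SimpleGraph W) : Prop :=
  IsEmpty (H ↪g G)

/-- `2P₃`: the disjoint union of two paths on three vertices. -/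
def twoP3 : SimpleGraph (Fin 3 ⊕ Fin 3) :=
  SimpleGraph.fromRel (fun u v =>
    match u, v with
    | Sum.inl a, Sum.inl b => (pathGraph 3).Adj a b
    | Sum.inr a, Sum.inr b => (pathGraph 3).Adj a b
    | _, _ => False)

/-- `4K₁`: the edgeless graph on four vertices. -/
def fourK1 : SimpleGraph (Fin 4) := ⊥

/-- The cycle on `n` vertices (for `n ≥ 3`). -/
def cycleG (n : ℕ) : SimpleGraph (ZMod n) :=
  SimpleGraph.fromRel (fun u v => v = u + 1)

/-- The graph `T₀`: vertices `0,…,8` stand for `a₀,a₁,b₀,b₁,b₂,b₃,c₁,c₂,c₃`. -/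
def T0 : SimpleGraph (Fin 9) :=
  SimpleGraph.fromRel (fun u v =>
    (u, v) ∈ ([(0,1),(0,2),(0,4),(0,5),(1,3),(1,4),(1,5),(2,6),(3,6),
               (4,7),(5,8),(6,7),(6,8),(7,8)] : List (Fin 9 × Fin 9)))

/-- The `t`-pentagon: `Sum.inl ()` is the vertex `a`, `Sum.inr (Sum.inl i)` is `bᵢ`,
and `Sum.inr (Sum.inr i)` is `cᵢ`. -/
def pentagon (t : ℕ) : SimpleGraph (Unit ⊕ Fin t ⊕ Fin t) :=
  SimpleGraph.fromRel (fun u v =>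
    match u, v with
    | Sum.inl _, Sum.inr (Sum.inl _) => True
    | Sum.inr (Sum.inl i), Sum.inr (Sum.inr j) => i = j
    | Sum.inr (Sum.inr _), Sum.inr (Sum.inr _) => True
    | _, _ => False)

/-- `X` is complete to `Y` in `G`. -/
def CompleteTo (G : SimpleGraph V) (X Y : Set V) : Prop :=
  ∀ x ∈ X, ∀ y ∈ Y, G.Adj x y

/-- `X` is anticomplete to `Y` in `G`. -/
def AnticompleteTo (G : SimpleGraph V) (X Y : Set V) : Prop :=
  ∀ x ∈ X, ∀ y ∈ Y, ¬ G.Adj x y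

/-- A simplicial vertex: its neighborhood is a clique. -/
def IsSimplicial (G : SimpleGraph V) (v : V) : Prop :=
  G.IsClique (G.neighborSet v)

/-- A universal vertex: adjacent to all other vertices. -/
def IsUniversal (G : SimpleGraph V) (v : V) : Prop :=
  ∀ w, w ≠ v → G.Adj v w

/-- A 5-basket partition `(A; B 0, B 1, B 2; C 0, C 1, C 2; F)` of `Q`. -/
def IsFiveBasketPartition (Q : SimpleGraph W) (A : Set W) (B C : Fin 3 → Set W)
    (F : Set W) : Prop :=
  (∀ i, Disjoint A (B i)) ∧ (∀ i, Disjoint A (C i)) ∧ Disjoint A F ∧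
  (∀ i j, i ≠ j → Disjoint (B i) (B j)) ∧
  (∀ i j, i ≠ j → Disjoint (C i) (C j)) ∧
  (∀ i j, Disjoint (B i) (C j)) ∧
  (∀ i, Disjoint (B i) F) ∧ (∀ i, Disjoint (C i) F) ∧
  (A ∪ (⋃ i, B i) ∪ (⋃ i, C i) ∪ F = Set.univ) ∧
  Q.IsClique A ∧ (∀ i, Q.IsClique (B i)) ∧ (∀ i, Q.IsClique (C i)) ∧ Q.IsClique F ∧
  A.Nonempty ∧ (∀ i, (B i).Nonempty) ∧ (∀ i, (C i).Nonempty) ∧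
  (∀ i j, i ≠ j → AnticompleteTo Q (B i) (B j)) ∧
  (∀ i j, i ≠ j → CompleteTo Q (C i) (C j)) ∧
  (∀ i, AnticompleteTo Q A (C i)) ∧
  (∀ i, CompleteTo Q (B i) (C i)) ∧
  (∀ i j, i ≠ j → AnticompleteTo Q (B i) (C j)) ∧
  (∃ istar : Fin 3,
    (∀ i, i ≠ istar → CompleteTo Q A (B i)) ∧
    (∀ a ∈ A, ∀ a' ∈ A,
      Q.neighborSet a ∩ B istar ⊆ Q.neighborSet a' ∩ B istar ∨
      Q.neighborSet a' ∩ B istar ⊆ Q.neighborSet a ∩ B istar) ∧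
    (∃ a ∈ A, B istar ⊆ Q.neighborSet a)) ∧
  (∃ jstar : Fin 3,
    CompleteTo Q F (B jstar ∪ C jstar ∪ F)ᶜ ∧
    AnticompleteTo Q F (B jstar ∪ C jstar))

/-- A 5-basket. -/
def IsFiveBasket (Q : SimpleGraph W) : Prop :=
  ∃ (A : Set W) (B C : Fin 3 → Set W) (F : Set W), IsFiveBasketPartition Q A B C F

/-- All conditions of a `t`-villa partition except that the parts exhaust the vertex set. -/
def VillaCore {t : ℕ} (Q : SimpleGraph W) (A : Set W) (B C : Fin t → Set W) : Prop :=
  (∀ i, Disjoint A (B i)) ∧ (∀ i, Disjoint A (C i)) ∧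
  (∀ i j, i ≠ j → Disjoint (B i) (B j)) ∧
  (∀ i j, i ≠ j → Disjoint (C i) (C j)) ∧
  (∀ i j, Disjoint (B i) (C j)) ∧
  Q.IsClique A ∧ (∀ i, Q.IsClique (B i)) ∧ (∀ i, Q.IsClique (C i)) ∧
  A.Nonempty ∧ (∀ i, (B i).Nonempty) ∧ (∀ i, (C i).Nonempty) ∧
  (∀ i, CompleteTo Q A (B i)) ∧ (∀ i, AnticompleteTo Q A (C i)) ∧
  (∀ i j, i ≠ j → AnticompleteTo Q (B i) (B j)) ∧
  (∀ i j, i ≠ j → CompleteTo Q (C i) (C j)) ∧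
  (∀ i j, i ≠ j → AnticompleteTo Q (B i) (C j)) ∧
  (∀ i, ∀ b ∈ B i, ∀ b' ∈ B i,
     Q.neighborSet b ∩ C i ⊆ Q.neighborSet b' ∩ C i ∨
     Q.neighborSet b' ∩ C i ⊆ Q.neighborSet b ∩ C i) ∧
  (∀ i, ∀ b ∈ B i, (Q.neighborSet b ∩ C i).Nonempty) ∧
  (∀ i, ∃ b ∈ B i, C i ⊆ Q.neighborSet b)

/-- A `t`-villa partition `(A; B 0,…,B (t-1); C 0,…,C (t-1))` of `Q`. -/
def IsVillaPartition {t : ℕ} (Q : SimpleGraph W) (A : Set W) (B C : Fin t → Set W) : Prop :=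
  VillaCore Q A B C ∧ A ∪ (⋃ i, B i) ∪ (⋃ i, C i) = Set.univ

/-- A `t`-villa. -/
def IsTVilla (t : ℕ) (Q : SimpleGraph W) : Prop :=
  ∃ (A : Set W) (B C : Fin t → Set W), IsVillaPartition Q A B C

/-- A villa: a `t`-villa for some `t ≥ 3`. -/
def IsVilla (Q : SimpleGraph W) : Prop :=
  ∃ t, 3 ≤ t ∧ IsTVilla t Q

/-- A `t`-mansion partition `(A; B; C; F; X; Y)` of `Q`. -/
def IsMansionPartition {t : ℕ} (Q : SimpleGraph W) (A : Set W) (B C : Fin t → Set W)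
    (F X Y : Set W) : Prop :=
  VillaCore Q A B C ∧
  Disjoint A F ∧ Disjoint A X ∧ Disjoint A Y ∧
  (∀ i, Disjoint (B i) F) ∧ (∀ i, Disjoint (B i) X) ∧ (∀ i, Disjoint (B i) Y) ∧
  (∀ i, Disjoint (C i) F) ∧ (∀ i, Disjoint (C i) X) ∧ (∀ i, Disjoint (C i) Y) ∧
  Disjoint F X ∧ Disjoint F Y ∧ Disjoint X Y ∧
  (A ∪ (⋃ i, B i) ∪ (⋃ i, C i) ∪ F ∪ X ∪ Y = Set.univ) ∧
  Q.IsClique F ∧ Q.IsClique X ∧ Q.IsClique Y ∧ F.Nonempty ∧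
  (∃ jstar : Fin t,
    CompleteTo Q F A ∧
    (∀ i, i ≠ jstar → CompleteTo Q F (B i)) ∧
    (∀ i, i ≠ jstar → CompleteTo Q F (C i)) ∧
    AnticompleteTo Q F (B jstar) ∧ AnticompleteTo Q F (C jstar) ∧
    CompleteTo Q (B jstar) (C jstar) ∧
    CompleteTo Q X A ∧ CompleteTo Q X (B jstar) ∧
    (∀ i, i ≠ jstar → AnticompleteTo Q X (B i)) ∧
    (∀ i, AnticompleteTo Q X (C i))) ∧
  CompleteTo Q F X ∧ CompleteTo Q F Y ∧
  AnticompleteTo Q X Y ∧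
  (∀ i, CompleteTo Q Y (C i)) ∧
  AnticompleteTo Q Y A ∧ (∀ i, AnticompleteTo Q Y (B i))

/-- A `t`-mansion. -/
def IsTMansion (t : ℕ) (Q : SimpleGraph W) : Prop :=
  ∃ (A : Set W) (B C : Fin t → Set W) (F X Y : Set W),
    IsMansionPartition Q A B C F X Y

/-- A mansion: a `t`-mansion for some `t ≥ 3`. -/
def IsMansion (Q : SimpleGraph W) : Prop :=
  ∃ t, 3 ≤ t ∧ IsTMansion t Q

/-- A `t`-frame partition of `Q`. -/
def IsFramePartition {t : ℕ} (Q : SimpleGraph W) (A : Set W) (B C : Fin t → Set W) : Prop :=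
  (∀ i, Disjoint A (B i)) ∧ (∀ i, Disjoint A (C i)) ∧
  (∀ i j, i ≠ j → Disjoint (B i) (B j)) ∧
  (∀ i j, i ≠ j → Disjoint (C i) (C j)) ∧
  (∀ i j, Disjoint (B i) (C j)) ∧
  (A ∪ (⋃ i, B i) ∪ (⋃ i, C i) = Set.univ) ∧
  A.Nonempty ∧ (∀ i, (B i).Nonempty) ∧ (∀ i, (C i).Nonempty) ∧
  (∀ a ∈ A, ∃ i j : Fin t, i ≠ j ∧ (∃ b ∈ B i, Q.Adj a b) ∧ (∃ b ∈ B j, Q.Adj a b)) ∧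
  (∀ i, AnticompleteTo Q A (C i)) ∧
  (∀ i j, i ≠ j → AnticompleteTo Q (B i) (B j)) ∧
  (∀ i j, i ≠ j → CompleteTo Q (C i) (C j)) ∧
  (∀ i j, i ≠ j → AnticompleteTo Q (B i) (C j)) ∧
  (∀ i, ∀ b ∈ B i, ∃ a ∈ A, Q.Adj b a) ∧
  (∀ i, ∀ b ∈ B i, ∃ c ∈ C i, Q.Adj b c) ∧
  (∀ i, ∀ c ∈ C i, ∃ b ∈ B i, Q.Adj c b)

/-- A `k`-ring partition of `Q` (indices modulo `k`). -/
def IsRingPartition {k : ℕ} (Q : SimpleGraph W) (X : ZMod k → Set W) : Prop :=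
  (∀ i j, i ≠ j → Disjoint (X i) (X j)) ∧
  (⋃ i, X i) = Set.univ ∧
  (∀ i, (X i).Nonempty) ∧
  (∀ i, ∀ u ∈ X i, X i ⊆ insert u (Q.neighborSet u)) ∧
  (∀ i, ∀ u ∈ X i, ∀ u' ∈ X i,
     insert u (Q.neighborSet u) ⊆ insert u' (Q.neighborSet u') ∨
     insert u' (Q.neighborSet u') ⊆ insert u (Q.neighborSet u)) ∧
  (∀ i, ∀ u ∈ X i, insert u (Q.neighborSet u) ⊆ X (i-1) ∪ X i ∪ X (i+1)) ∧
  (∀ i, ∃ u ∈ X i, X (i-1) ∪ X i ∪ X (i+1) ⊆ insert u (Q.neighborSet u))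

/-- A `k`-ring. -/
def IsRing (k : ℕ) (Q : SimpleGraph W) : Prop :=
  ∃ X : ZMod k → Set W, IsRingPartition Q X

/-- A 5-crown. -/
def IsFiveCrown (Q : SimpleGraph W) : Prop :=
  ∃ X : ZMod 5 → Set W, IsRingPartition Q X ∧
    ∃ istar : ZMod 5, CompleteTo Q (X (istar - 1)) (X (istar - 2)) ∧
      CompleteTo Q (X (istar + 1)) (X (istar + 2))

/-! A mansion is covered by cliques in a rigid pattern: `A ∪ F ∪ X` and `⋃ Cᵢ ∪ Y` are cliques, the
non-neighbours of a vertex of `A ∪ F` form a clique, and `⋃ Bᵢ ∪ X` induces a disjoint union of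
cliques, so an induced `P₃` avoiding `A ∪ F ∪ Y` meets the clique `⋃ Cᵢ`.

In `2P₃` and in a hole of length at least six every vertex has two nonadjacent non-neighbours
and is anticomplete to an induced `P₃`; this keeps the copy out of `A ∪ F ∪ Y`, so each of its
induced `P₃`'s meets `⋃ Cᵢ`, which forces two nonadjacent vertices into that clique. In `C₄`, the
common neighbours of a vertex of `A ∪ F` and a non-neighbour form a clique, and so do the
neighbours of a vertex of `X ∪ Y` outside `A ∪ F`; this pushes the square into `⋃ Bᵢ ∪ ⋃ Cᵢ`,
where it contradicts the nested neighbourhoods of `Bᵢ` in `Cᵢ`. In `T₀`, `a₀` has three pairwise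
nonadjacent neighbours, which forces it into `A ∪ F` because every other neighbourhood is covered
by two cliques; but its non-neighbours `b₁` and `c₂` are nonadjacent.

Every vertex has a non-neighbour in `⋃ Cᵢ` or in `A`, and `A` is anticomplete to `⋃ Cᵢ`; this gives
anticonnectivity and rules out universal vertices. -/

theorem _root_.SimpleGraph.IsClique.not_compl_adj {G : SimpleGraph V} {s : Set V}
    (hs : G.IsClique s) {u w : V} (hu : u ∈ s) (hw : w ∈ s) : ¬ Gᶜ.Adj u w := fun h =>
  ((compl_adj G u w).1 h).2 (hs hu hw ((compl_adj G u w).1 h).1)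

theorem _root_.SimpleGraph.Embedding.map_compl_adj_iff {G : SimpleGraph V} {H : SimpleGraph W}
    (f : G ↪g H) {a b : V} : Hᶜ.Adj (f a) (f b) ↔ Gᶜ.Adj a b :=
  (Embedding.complEquiv f).map_adj_iff

theorem isClique_union_of_completeTo {G : SimpleGraph V} {s u : Set V} (hs : G.IsClique s)
    (hu : G.IsClique u) (hsu : CompleteTo G s u) : G.IsClique (s ∪ u) :=
  Set.pairwise_union.2 ⟨hs, hu, fun a ha b hb _ => ⟨hsu a ha b hb, (hsu a ha b hb).symm⟩⟩

theorem compl_adj_of_anticompleteTo {G : SimpleGraph V} {s u : Set V} (hd : Disjoint s u)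
    (ha : AnticompleteTo G s u) {x y : V} (hx : x ∈ s) (hy : y ∈ u) : Gᶜ.Adj x y :=
  (compl_adj G x y).2 ⟨hd.ne_of_mem hx hy, ha x hx y hy⟩

theorem not_compl_adj_of_mem_union_isClique {G : SimpleGraph V} {K L : Set V}
    (hK : G.IsClique K) (hL : G.IsClique L) {u₁ u₂ u₃ : V} (h₁ : u₁ ∈ K ∪ L) (h₂ : u₂ ∈ K ∪ L)
    (h₃ : u₃ ∈ K ∪ L) (h₁₂ : Gᶜ.Adj u₁ u₂) (h₁₃ : Gᶜ.Adj u₁ u₃) : ¬ Gᶜ.Adj u₂ u₃ := by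
  intro h₂₃
  rcases h₁ with h₁ | h₁ <;> rcases h₂ with h₂ | h₂ <;> rcases h₃ with h₃ | h₃ <;>
    first
    | exact hK.not_compl_adj h₁ h₂ h₁₂ | exact hL.not_compl_adj h₁ h₂ h₁₂
    | exact hK.not_compl_adj h₁ h₃ h₁₃ | exact hL.not_compl_adj h₁ h₃ h₁₃
    | exact hK.not_compl_adj h₂ h₃ h₂₃ | exact hL.not_compl_adj h₂ h₃ h₂₃

def IsInducedP3 (G : SimpleGraph V) (u v w : V) : Prop :=
  G.Adj u v ∧ G.Adj v w ∧ Gᶜ.Adj u w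

theorem cycleG_adj_add_one {k : ℕ} (hk : k ≠ 1) (a : ZMod k) : (cycleG k).Adj a (a + 1) := by
  have h1 : (1 : ZMod k) ≠ 0 := by
    rw [← Nat.cast_one, Ne, ZMod.natCast_eq_zero_iff, Nat.dvd_one]
    exact hk
  simp [cycleG, fromRel_adj, h1]

theorem cycleG_compl_adj_add {k d : ℕ} (hd : 2 ≤ d) (hdk : d + 2 ≤ k) (a : ZMod k) :
    (cycleG k)ᶜ.Adj a (a + d) := by
  have h0 : (d : ZMod k) ≠ 0 := by
    rw [Ne, ZMod.natCast_eq_zero_iff]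
    exact Nat.not_dvd_of_pos_of_lt (by omega) (by omega)
  have h1 : (d : ZMod k) ≠ 1 := by
    rw [← Nat.cast_one, Ne, ZMod.natCast_eq_natCast_iff', Nat.mod_eq_of_lt (by omega),
      Nat.mod_eq_of_lt (by omega)]
    omega
  have h2 : (d : ZMod k) + 1 ≠ 0 := by
    rw [← Nat.cast_succ, Ne, ZMod.natCast_eq_zero_iff]
    exact Nat.not_dvd_of_pos_of_lt (by omega) (by omega)
  simp only [compl_adj, cycleG, fromRel_adj, ne_eq, left_eq_add, add_right_inj, add_assoc]
  tauto

structure MansionPartition (Q : SimpleGraph W) (t : ℕ) where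
  A : Set W
  B : Fin t → Set W
  C : Fin t → Set W
  F : Set W
  X : Set W
  Y : Set W
  j : Fin t
  disjoint_A_B : ∀ i, Disjoint A (B i)
  disjoint_A_C : ∀ i, Disjoint A (C i)
  disjoint_B_B : ∀ i k, i ≠ k → Disjoint (B i) (B k)
  disjoint_C_C : ∀ i k, i ≠ k → Disjoint (C i) (C k)
  disjoint_B_C : ∀ i k, Disjoint (B i) (C k)
  isClique_A : Q.IsClique A
  isClique_B : ∀ i, Q.IsClique (B i)
  isClique_C : ∀ i, Q.IsClique (C i)
  A_nonempty : A.Nonempty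
  B_nonempty : ∀ i, (B i).Nonempty
  C_nonempty : ∀ i, (C i).Nonempty
  complete_A_B : ∀ i, CompleteTo Q A (B i)
  anticomplete_A_C : ∀ i, AnticompleteTo Q A (C i)
  anticomplete_B_B : ∀ i k, i ≠ k → AnticompleteTo Q (B i) (B k)
  complete_C_C : ∀ i k, i ≠ k → CompleteTo Q (C i) (C k)
  anticomplete_B_C : ∀ i k, i ≠ k → AnticompleteTo Q (B i) (C k)
  nested : ∀ i, ∀ b ∈ B i, ∀ b' ∈ B i,
    Q.neighborSet b ∩ C i ⊆ Q.neighborSet b' ∩ C i ∨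
    Q.neighborSet b' ∩ C i ⊆ Q.neighborSet b ∩ C i
  exists_adj_C : ∀ i, ∀ b ∈ B i, (Q.neighborSet b ∩ C i).Nonempty
  exists_complete_C : ∀ i, ∃ b ∈ B i, C i ⊆ Q.neighborSet b
  disjoint_A_Y : Disjoint A Y
  disjoint_B_F : ∀ i, Disjoint (B i) F
  disjoint_C_F : ∀ i, Disjoint (C i) F
  disjoint_C_X : ∀ i, Disjoint (C i) X
  cover : A ∪ (⋃ i, B i) ∪ (⋃ i, C i) ∪ F ∪ X ∪ Y = Set.univ
  isClique_F : Q.IsClique F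
  isClique_X : Q.IsClique X
  isClique_Y : Q.IsClique Y
  F_nonempty : F.Nonempty
  complete_F_A : CompleteTo Q F A
  complete_F_B : ∀ i, i ≠ j → CompleteTo Q F (B i)
  complete_F_C : ∀ i, i ≠ j → CompleteTo Q F (C i)
  anticomplete_F_Bj : AnticompleteTo Q F (B j)
  anticomplete_F_Cj : AnticompleteTo Q F (C j)
  complete_Bj_Cj : CompleteTo Q (B j) (C j)
  complete_X_A : CompleteTo Q X A
  complete_X_Bj : CompleteTo Q X (B j)
  anticomplete_X_B : ∀ i, i ≠ j → AnticompleteTo Q X (B i)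
  anticomplete_X_C : ∀ i, AnticompleteTo Q X (C i)
  complete_F_X : CompleteTo Q F X
  complete_F_Y : CompleteTo Q F Y
  anticomplete_X_Y : AnticompleteTo Q X Y
  complete_Y_C : ∀ i, CompleteTo Q Y (C i)
  anticomplete_Y_A : AnticompleteTo Q Y A
  anticomplete_Y_B : ∀ i, AnticompleteTo Q Y (B i)

theorem IsTMansion.nonempty_mansionPartition {t : ℕ} {Q : SimpleGraph W}
    (h : IsTMansion t Q) : Nonempty (MansionPartition Q t) := by
  obtain ⟨A, B, C, F, X, Y, ⟨dAB, dAC, dBB, dCC, dBC, cA, cB, cC, nA, nB, nC, AB, AC, BB, CC, BC,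
    nest, BCn, BCc⟩, -, -, dAY, dBF, -, -, dCF, dCX, -, -, -, -, cover, cF, cX, cY, nF,
    ⟨j, FA, FB, FC, FBj, FCj, BjCj, XA, XBj, XB, XC⟩, FX, FY, XY, YC, YA, YB⟩ := h
  exact ⟨⟨A, B, C, F, X, Y, j, dAB, dAC, dBB, dCC, dBC, cA, cB, cC, nA, nB, nC, AB, AC, BB, CC, BC,
    nest, BCn, BCc, dAY, dBF, dCF, dCX, cover, cF, cX, cY, nF, FA, FB, FC, FBj, FCj, BjCj, XA, XBj,
    XB, XC, FX, FY, XY, YC, YA, YB⟩⟩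

namespace MansionPartition

variable {Q : SimpleGraph W} {t : ℕ}

section

variable (M : MansionPartition Q t)

def CY : Set W := (⋃ i, M.C i) ∪ M.Y

def BX : Set W := (⋃ i, M.B i) ∪ M.X

def AFX : Set W := M.A ∪ M.F ∪ M.X

theorem mem_cases (v : W) :
    v ∈ M.A ∨ (∃ i, v ∈ M.B i) ∨ (∃ i, v ∈ M.C i) ∨ v ∈ M.F ∨ v ∈ M.X ∨ v ∈ M.Y := by
  have hv : v ∈ M.A ∪ (⋃ i, M.B i) ∪ (⋃ i, M.C i) ∪ M.F ∪ M.X ∪ M.Y := M.cover ▸ Set.mem_univ v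
  simpa only [Set.mem_union, Set.mem_iUnion, or_assoc] using hv

variable {M}

theorem eq_of_adj_B_B {i k : Fin t} {u w : W} (hu : u ∈ M.B i) (hw : w ∈ M.B k)
    (h : Q.Adj u w) : i = k :=
  by_contra fun hik => M.anticomplete_B_B i k hik u hu w hw h

theorem eq_of_adj_B_C {i k : Fin t} {u w : W} (hu : u ∈ M.B i) (hw : w ∈ M.C k)
    (h : Q.Adj u w) : i = k :=
  by_contra fun hik => M.anticomplete_B_C i k hik u hu w hw h

theorem eq_j_of_adj_X_B {i : Fin t} {x b : W} (hx : x ∈ M.X) (hb : b ∈ M.B i)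
    (h : Q.Adj x b) : i = M.j :=
  by_contra fun hij => M.anticomplete_X_B i hij x hx b hb h

theorem ne_j_of_adj_F_B {i : Fin t} {f b : W} (hf : f ∈ M.F) (hb : b ∈ M.B i)
    (h : Q.Adj f b) : i ≠ M.j := by
  rintro rfl
  exact M.anticomplete_F_Bj f hf b hb h

theorem ne_j_of_adj_F_C {i : Fin t} {f c : W} (hf : f ∈ M.F) (hc : c ∈ M.C i)
    (h : Q.Adj f c) : i ≠ M.j := by
  rintro rfl
  exact M.anticomplete_F_Cj f hf c hc h

variable (M)

theorem isClique_iUnion_C : Q.IsClique (⋃ i, M.C i) := by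
  intro u hu w hw huw
  obtain ⟨i, hi⟩ := Set.mem_iUnion.1 hu
  obtain ⟨k, hk⟩ := Set.mem_iUnion.1 hw
  rcases eq_or_ne i k with rfl | hik
  · exact M.isClique_C i hi hk huw
  · exact M.complete_C_C i k hik u hi w hk

theorem isClique_CY : Q.IsClique M.CY :=
  isClique_union_of_completeTo M.isClique_iUnion_C M.isClique_Y fun u hu y hy =>
    let ⟨i, hi⟩ := Set.mem_iUnion.1 hu
    (M.complete_Y_C i y hy u hi).symm

theorem isClique_AFX : Q.IsClique M.AFX := by
  refine isClique_union_of_completeTo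
    (isClique_union_of_completeTo M.isClique_A M.isClique_F fun a ha f hf =>
      (M.complete_F_A f hf a ha).symm) M.isClique_X ?_
  rintro u (hu | hu) x hx
  · exact (M.complete_X_A x hx u hu).symm
  · exact M.complete_F_X u hu x hx

theorem isClique_Bj_union_X : Q.IsClique (M.B M.j ∪ M.X) :=
  isClique_union_of_completeTo (M.isClique_B M.j) M.isClique_X fun b hb x hx =>
    (M.complete_X_Bj x hx b hb).symm

theorem isClique_Bj_union_Cj : Q.IsClique (M.B M.j ∪ M.C M.j) :=
  isClique_union_of_completeTo (M.isClique_B M.j) (M.isClique_C M.j) M.complete_Bj_Cj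

variable {M}

theorem notMem_CY_of_adj_A {a u : W} (ha : a ∈ M.A) (h : Q.Adj a u) : u ∉ M.CY := by
  rintro (hu | hu)
  · obtain ⟨i, hi⟩ := Set.mem_iUnion.1 hu
    exact M.anticomplete_A_C i a ha u hi h
  · exact M.anticomplete_Y_A u hu a ha h.symm

theorem notMem_of_adj_F {f u : W} (hf : f ∈ M.F) (h : Q.Adj f u) :
    u ∉ M.B M.j ∪ M.C M.j := by
  rintro (hu | hu)
  exacts [M.anticomplete_F_Bj f hf u hu h, M.anticomplete_F_Cj f hf u hu h]

theorem mem_of_adj_B {i : Fin t} {b u : W} (hb : b ∈ M.B i) (h : Q.Adj b u) :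
    u ∈ M.AFX ∪ M.B i ∪ M.C i := by
  rcases M.mem_cases u with hu | ⟨k, hu⟩ | ⟨k, hu⟩ | hu | hu | hu
  · exact Or.inl (Or.inl (Or.inl (Or.inl hu)))
  · exact Or.inl (Or.inr (eq_of_adj_B_B hb hu h ▸ hu))
  · exact Or.inr (eq_of_adj_B_C hb hu h ▸ hu)
  · exact Or.inl (Or.inl (Or.inl (Or.inr hu)))
  · exact Or.inl (Or.inl (Or.inr hu))
  · exact absurd h.symm (M.anticomplete_Y_B i u hu b hb)

theorem mem_of_adj_C {i : Fin t} {c u : W} (hc : c ∈ M.C i) (h : Q.Adj c u) :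
    u ∈ M.B i ∪ M.F ∪ M.CY := by
  rcases M.mem_cases u with hu | ⟨k, hu⟩ | ⟨k, hu⟩ | hu | hu | hu
  · exact absurd h.symm (M.anticomplete_A_C i u hu c hc)
  · exact Or.inl (Or.inl ((eq_of_adj_B_C hu hc h.symm).symm ▸ hu))
  · exact Or.inr (Or.inl (Set.mem_iUnion.2 ⟨k, hu⟩))
  · exact Or.inl (Or.inr hu)
  · exact absurd h.symm (M.anticomplete_X_C i u hu c hc)
  · exact Or.inr (Or.inr hu)

theorem mem_of_adj_X {x u : W} (hx : x ∈ M.X) (h : Q.Adj x u) : u ∈ M.AFX ∪ M.B M.j := by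
  rcases M.mem_cases u with hu | ⟨k, hu⟩ | ⟨k, hu⟩ | hu | hu | hu
  · exact Or.inl (Or.inl (Or.inl hu))
  · exact Or.inr (eq_j_of_adj_X_B hx hu h ▸ hu)
  · exact absurd h (M.anticomplete_X_C k x hx u hu)
  · exact Or.inl (Or.inl (Or.inr hu))
  · exact Or.inl (Or.inr hu)
  · exact absurd h (M.anticomplete_X_Y x hx u hu)

theorem mem_of_adj_Y {y u : W} (hy : y ∈ M.Y) (h : Q.Adj y u) : u ∈ M.F ∪ M.CY := by
  rcases M.mem_cases u with hu | ⟨k, hu⟩ | ⟨k, hu⟩ | hu | hu | hu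
  · exact absurd h (M.anticomplete_Y_A y hy u hu)
  · exact absurd h (M.anticomplete_Y_B k y hy u hu)
  · exact Or.inr (Or.inl (Set.mem_iUnion.2 ⟨k, hu⟩))
  · exact Or.inl hu
  · exact absurd h.symm (M.anticomplete_X_Y u hu y hy)
  · exact Or.inr (Or.inr hu)

theorem mem_CY_of_compl_adj_A {a u : W} (ha : a ∈ M.A) (h : Qᶜ.Adj a u) : u ∈ M.CY := by
  rcases M.mem_cases u with hu | ⟨k, hu⟩ | ⟨k, hu⟩ | hu | hu | hu
  · exact absurd (M.isClique_A ha hu h.ne) h.2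
  · exact absurd (M.complete_A_B k a ha u hu) h.2
  · exact Or.inl (Set.mem_iUnion.2 ⟨k, hu⟩)
  · exact absurd (M.complete_F_A u hu a ha).symm h.2
  · exact absurd (M.complete_X_A u hu a ha).symm h.2
  · exact Or.inr hu

theorem mem_of_compl_adj_F {f u : W} (hf : f ∈ M.F) (h : Qᶜ.Adj f u) :
    u ∈ M.B M.j ∪ M.C M.j := by
  rcases M.mem_cases u with hu | ⟨k, hu⟩ | ⟨k, hu⟩ | hu | hu | hu
  · exact absurd (M.complete_F_A f hf u hu) h.2
  · rcases eq_or_ne k M.j with rfl | hk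
    exacts [Or.inl hu, absurd (M.complete_F_B k hk f hf u hu) h.2]
  · rcases eq_or_ne k M.j with rfl | hk
    exacts [Or.inr hu, absurd (M.complete_F_C k hk f hf u hu) h.2]
  · exact absurd (M.isClique_F hf hu h.ne) h.2
  · exact absurd (M.complete_F_X f hf u hu) h.2
  · exact absurd (M.complete_F_Y f hf u hu) h.2

theorem mem_of_compl_adj_Y {y u : W} (hy : y ∈ M.Y) (h : Qᶜ.Adj y u) : u ∈ M.A ∪ M.BX := by
  rcases M.mem_cases u with hu | ⟨k, hu⟩ | ⟨k, hu⟩ | hu | hu | hu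
  · exact Or.inl hu
  · exact Or.inr (Or.inl (Set.mem_iUnion.2 ⟨k, hu⟩))
  · exact absurd (M.complete_Y_C k y hy u hu) h.2
  · exact absurd (M.complete_F_Y u hu y hy).symm h.2
  · exact Or.inr (Or.inr hu)
  · exact absurd (M.isClique_Y hy hu h.ne) h.2

variable (M)

theorem isClique_AFX_inter_union_B {i : Fin t} {b : W} (hb : b ∈ M.B i) :
    Q.IsClique (M.AFX ∩ Q.neighborSet b ∪ M.B i) := by
  refine isClique_union_of_completeTo (M.isClique_AFX.subset Set.inter_subset_left)
    (M.isClique_B i) ?_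
  rintro u ⟨(hu | hu) | hu, hbu⟩ b' hb'
  · exact M.complete_A_B i u hu b' hb'
  · exact M.complete_F_B i (ne_j_of_adj_F_B hu hb hbu.symm) u hu b' hb'
  · obtain rfl := eq_j_of_adj_X_B hu hb hbu.symm
    exact M.complete_X_Bj u hu b' hb'

theorem isClique_B_union_F_inter {i : Fin t} {c : W} (hc : c ∈ M.C i) :
    Q.IsClique (M.B i ∪ M.F ∩ Q.neighborSet c) :=
  isClique_union_of_completeTo (M.isClique_B i) (M.isClique_F.subset Set.inter_subset_left)
    fun b hb f ⟨hf, hcf⟩ => (M.complete_F_B i (ne_j_of_adj_F_C hf hc hcf.symm) f hf b hb).symm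

theorem exists_isClique_superset_neighborSet_inter_BX {v : W} (hv : v ∈ M.BX) :
    ∃ K, Q.IsClique K ∧ Q.neighborSet v ∩ M.BX ⊆ K := by
  rcases hv with hv | hv
  · obtain ⟨i, hi⟩ := Set.mem_iUnion.1 hv
    rcases eq_or_ne i M.j with rfl | hij
    · refine ⟨_, M.isClique_Bj_union_X, fun u ⟨hvu, hu⟩ => ?_⟩
      rcases hu with hu | hu
      · obtain ⟨k, hk⟩ := Set.mem_iUnion.1 hu
        exact Or.inl ((eq_of_adj_B_B hi hk hvu).symm ▸ hk)
      · exact Or.inr hu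
    · refine ⟨_, M.isClique_B i, fun u ⟨hvu, hu⟩ => ?_⟩
      rcases hu with hu | hu
      · obtain ⟨k, hk⟩ := Set.mem_iUnion.1 hu
        exact (eq_of_adj_B_B hi hk hvu).symm ▸ hk
      · exact absurd (eq_j_of_adj_X_B hu hi hvu.symm) hij
  · refine ⟨_, M.isClique_Bj_union_X, fun u ⟨hvu, hu⟩ => ?_⟩
    rcases hu with hu | hu
    · obtain ⟨k, hk⟩ := Set.mem_iUnion.1 hu
      exact Or.inl (eq_j_of_adj_X_B hv hk hvu ▸ hk)
    · exact Or.inr hu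

theorem not_isInducedP3_of_mem_BX {u v w : W} (hu : u ∈ M.BX) (hv : v ∈ M.BX) (hw : w ∈ M.BX) :
    ¬ IsInducedP3 Q u v w := by
  rintro ⟨huv, hvw, huw⟩
  obtain ⟨K, hK, hsub⟩ := M.exists_isClique_superset_neighborSet_inter_BX hv
  exact hK.not_compl_adj (hsub ⟨huv.symm, hu⟩) (hsub ⟨hvw, hw⟩) huw

theorem mem_BX_or_mem_C {v : W} (hv : v ∉ M.A ∪ M.F ∪ M.Y) : v ∈ M.BX ∨ v ∈ ⋃ i, M.C i := by
  rcases M.mem_cases v with h | ⟨k, h⟩ | ⟨k, h⟩ | h | h | h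
  · exact absurd (Or.inl (Or.inl h)) hv
  · exact Or.inl (Or.inl (Set.mem_iUnion.2 ⟨k, h⟩))
  · exact Or.inr (Set.mem_iUnion.2 ⟨k, h⟩)
  · exact absurd (Or.inl (Or.inr h)) hv
  · exact Or.inl (Or.inr h)
  · exact absurd (Or.inr h) hv

theorem exists_mem_C_of_isInducedP3 {u v w : W} (hP : IsInducedP3 Q u v w)
    (hu : u ∉ M.A ∪ M.F ∪ M.Y) (hv : v ∉ M.A ∪ M.F ∪ M.Y) (hw : w ∉ M.A ∪ M.F ∪ M.Y) :
    u ∈ ⋃ i, M.C i ∨ v ∈ ⋃ i, M.C i ∨ w ∈ ⋃ i, M.C i := by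
  rcases M.mem_BX_or_mem_C hu with hu | hu
  · rcases M.mem_BX_or_mem_C hv with hv | hv
    · rcases M.mem_BX_or_mem_C hw with hw | hw
      · exact absurd hP (M.not_isInducedP3_of_mem_BX hu hv hw)
      · exact Or.inr (Or.inr hw)
    · exact Or.inr (Or.inl hv)
  · exact Or.inl hu

theorem isClique_compl_neighborSet {v : W} (hv : v ∈ M.A ∪ M.F) :
    Q.IsClique (Qᶜ.neighborSet v) := by
  rcases hv with hv | hv
  · exact M.isClique_CY.subset fun u hu => mem_CY_of_compl_adj_A hv hu
  · exact M.isClique_Bj_union_Cj.subset fun u hu => mem_of_compl_adj_F hv hu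

theorem isClique_neighborSet_diff {v : W} (hv : v ∈ M.X ∪ M.Y) :
    Q.IsClique (Q.neighborSet v \ (M.A ∪ M.F)) := by
  rcases hv with hv | hv
  · refine M.isClique_Bj_union_X.subset fun u ⟨hvu, huAF⟩ => ?_
    rcases mem_of_adj_X hv hvu with (hu | hu) | hu
    exacts [absurd hu huAF, Or.inr hu, Or.inl hu]
  · refine M.isClique_CY.subset fun u ⟨hvu, huAF⟩ => ?_
    exact (mem_of_adj_Y hv hvu).resolve_left fun hu => huAF (Or.inr hu)

theorem isClique_neighborSet_inter {v z : W} (hv : v ∈ M.A ∪ M.F) (hz : Qᶜ.Adj v z) :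
    Q.IsClique (Q.neighborSet v ∩ Q.neighborSet z) := by
  rcases hv with hv | hv
  · rcases mem_CY_of_compl_adj_A hv hz with hzC | hzY
    · obtain ⟨i, hi⟩ := Set.mem_iUnion.1 hzC
      refine (M.isClique_B_union_F_inter hi).subset fun u ⟨hvu, hzu⟩ => ?_
      rcases mem_of_adj_C hi hzu with (hu | hu) | hu
      exacts [Or.inl hu, Or.inr ⟨hu, hzu⟩, absurd hu (notMem_CY_of_adj_A hv hvu)]
    · refine M.isClique_F.subset fun u ⟨hvu, hzu⟩ => ?_
      exact (mem_of_adj_Y hzY hzu).resolve_right (notMem_CY_of_adj_A hv hvu)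
  · rcases mem_of_compl_adj_F hv hz with hzB | hzC
    · refine M.isClique_AFX.subset fun u ⟨hvu, hzu⟩ => ?_
      rcases mem_of_adj_B hzB hzu with (hu | hu) | hu
      exacts [hu, absurd (Or.inl hu) (notMem_of_adj_F hv hvu),
        absurd (Or.inr hu) (notMem_of_adj_F hv hvu)]
    · refine M.isClique_CY.subset fun u ⟨hvu, hzu⟩ => ?_
      rcases mem_of_adj_C hzC hzu with (hu | hu) | hu
      exacts [absurd (Or.inl hu) (notMem_of_adj_F hv hvu),
        absurd hzu.symm (M.anticomplete_F_Cj u hu z hzC), hu]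

theorem exists_isClique_cover_neighborSet {v : W} (hv : v ∉ M.A ∪ M.F) :
    ∃ K L : Set W, Q.IsClique K ∧ Q.IsClique L ∧ Q.neighborSet v ⊆ K ∪ L := by
  rcases M.mem_cases v with h | ⟨i, h⟩ | ⟨i, h⟩ | h | h | h
  · exact absurd (Or.inl h) hv
  · refine ⟨_, _, M.isClique_AFX_inter_union_B h, M.isClique_C i, fun u hu => ?_⟩
    rcases mem_of_adj_B h hu with (hu' | hu') | hu'
    exacts [Or.inl (Or.inl ⟨hu', hu⟩), Or.inl (Or.inr hu'), Or.inr hu']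
  · refine ⟨_, _, M.isClique_B_union_F_inter h, M.isClique_CY, fun u hu => ?_⟩
    rcases mem_of_adj_C h hu with (hu' | hu') | hu'
    exacts [Or.inl (Or.inl hu'), Or.inl (Or.inr ⟨hu', hu⟩), Or.inr hu']
  · exact absurd (Or.inr h) hv
  · exact ⟨_, _, M.isClique_AFX, M.isClique_B M.j, fun u hu => mem_of_adj_X h hu⟩
  · exact ⟨_, _, M.isClique_F, M.isClique_CY, fun u hu => mem_of_adj_Y h hu⟩

theorem mem_A_union_F_of_compl_adj_neighbors {v u₁ u₂ u₃ : W} (h₁ : Q.Adj v u₁)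
    (h₂ : Q.Adj v u₂) (h₃ : Q.Adj v u₃) (h₁₂ : Qᶜ.Adj u₁ u₂) (h₁₃ : Qᶜ.Adj u₁ u₃)
    (h₂₃ : Qᶜ.Adj u₂ u₃) : v ∈ M.A ∪ M.F := by
  by_contra hv
  obtain ⟨K, L, hK, hL, hKL⟩ := M.exists_isClique_cover_neighborSet hv
  exact not_compl_adj_of_mem_union_isClique hK hL (hKL h₁) (hKL h₂) (hKL h₃) h₁₂ h₁₃ h₂₃

theorem notMem_AFY_of_compl_adj_isInducedP3 {v u₁ u₂ u₃ : W} (hP : IsInducedP3 Q u₁ u₂ u₃)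
    (h₁ : Qᶜ.Adj v u₁) (h₂ : Qᶜ.Adj v u₂) (h₃ : Qᶜ.Adj v u₃) (hA₁ : u₁ ∉ M.A) (hA₂ : u₂ ∉ M.A)
    (hA₃ : u₃ ∉ M.A) : v ∉ M.A ∪ M.F ∪ M.Y := by
  rintro (hv | hv)
  · exact (M.isClique_compl_neighborSet hv).not_compl_adj h₁ h₃ hP.2.2
  · have hBX (u : W) (hu : Qᶜ.Adj v u) (huA : u ∉ M.A) : u ∈ M.BX :=
      (mem_of_compl_adj_Y hv hu).resolve_left huA
    exact M.not_isInducedP3_of_mem_BX (hBX _ h₁ hA₁) (hBX _ h₂ hA₂) (hBX _ h₃ hA₃) hP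

theorem not_compl_adj_of_nested {b₁ b₂ c₁ c₂ : W} (hb₁ : b₁ ∈ ⋃ i, M.B i)
    (hb₂ : b₂ ∈ ⋃ i, M.B i) (hc₁ : c₁ ∈ ⋃ i, M.C i) (hc₂ : c₂ ∈ ⋃ i, M.C i)
    (h₁₂ : Q.Adj b₁ b₂) (h₁ : Q.Adj b₁ c₁) (h₂ : Q.Adj b₂ c₂) (h₁' : Qᶜ.Adj b₁ c₂) :
    ¬ Qᶜ.Adj b₂ c₁ := by
  intro h₂'
  obtain ⟨i, hb₁⟩ := Set.mem_iUnion.1 hb₁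
  obtain ⟨k, hb₂⟩ := Set.mem_iUnion.1 hb₂
  obtain ⟨m, hc₁⟩ := Set.mem_iUnion.1 hc₁
  obtain ⟨n, hc₂⟩ := Set.mem_iUnion.1 hc₂
  obtain rfl := eq_of_adj_B_B hb₁ hb₂ h₁₂
  obtain rfl := eq_of_adj_B_C hb₁ hc₁ h₁
  obtain rfl := eq_of_adj_B_C hb₂ hc₂ h₂
  rcases M.nested i b₁ hb₁ b₂ hb₂ with h | h
  · exact h₂'.2 (h ⟨h₁, hc₁⟩).1
  · exact h₁'.2 (h ⟨h₂, hc₂⟩).1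

end

theorem exists_mem_C_of_anticomplete_P3 (M : MansionPartition Q t) {p q : Fin 3 → W}
    (hp : IsInducedP3 Q (p 0) (p 1) (p 2))
    (hq : IsInducedP3 Q (q 0) (q 1) (q 2)) (hpq : ∀ a b, Qᶜ.Adj (p a) (q b)) :
    ∃ a, p a ∈ ⋃ i, M.C i := by
  have hqA (b : Fin 3) : q b ∉ M.A := fun h =>
    (M.isClique_compl_neighborSet (Or.inl h)).not_compl_adj (hpq 0 b).symm (hpq 2 b).symm hp.2.2
  have hpAFY (a : Fin 3) : p a ∉ M.A ∪ M.F ∪ M.Y :=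
    M.notMem_AFY_of_compl_adj_isInducedP3 hq (hpq a 0) (hpq a 1) (hpq a 2) (hqA 0) (hqA 1) (hqA 2)
  rcases M.exists_mem_C_of_isInducedP3 hp (hpAFY 0) (hpAFY 1) (hpAFY 2) with h | h | h
  exacts [⟨0, h⟩, ⟨1, h⟩, ⟨2, h⟩]

theorem indFree_twoP3 (M : MansionPartition Q t) : IndFree Q twoP3 := by
  refine ⟨fun f => ?_⟩
  have hP (s : Fin 3 → Fin 3 ⊕ Fin 3) (hs : s = Sum.inl ∨ s = Sum.inr) :
      IsInducedP3 Q (f (s 0)) (f (s 1)) (f (s 2)) := by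
    refine ⟨f.map_adj_iff.2 ?_, f.map_adj_iff.2 ?_, f.map_compl_adj_iff.2 ?_⟩ <;>
      rcases hs with rfl | rfl <;> simp [twoP3, fromRel_adj, pathGraph_adj]
  have hpq (a b : Fin 3) : Qᶜ.Adj (f (.inl a)) (f (.inr b)) :=
    f.map_compl_adj_iff.2 (by simp [twoP3, fromRel_adj])
  obtain ⟨a, ha⟩ := M.exists_mem_C_of_anticomplete_P3 (hP _ (.inl rfl)) (hP _ (.inr rfl)) hpq
  obtain ⟨b, hb⟩ := M.exists_mem_C_of_anticomplete_P3 (hP _ (.inr rfl)) (hP _ (.inl rfl))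
    fun b a => (hpq a b).symm
  exact M.isClique_CY.not_compl_adj (Or.inl ha) (Or.inl hb) (hpq a b)

theorem indFree_cycleG_four (M : MansionPartition Q t) : IndFree Q (cycleG 4) := by
  refine ⟨fun f => ?_⟩
  let g : ℕ → W := fun n => f n
  have period (n : ℕ) : g (n + 4) = g n := by
    simp only [g, Nat.cast_add, ZMod.natCast_self, add_zero]
  have adj (n : ℕ) : Q.Adj (g n) (g (n + 1)) := by
    simpa only [g, Nat.cast_succ] using
      f.map_adj_iff.2 (cycleG_adj_add_one (by omega) (n : ZMod 4))
  have opp (n : ℕ) : Qᶜ.Adj (g n) (g (n + 2)) := by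
    simpa only [g, Nat.cast_add] using
      f.map_compl_adj_iff.2 (cycleG_compl_adj_add le_rfl le_rfl (n : ZMod 4))
  have rotate {P : W → Prop} (h : ∀ n, P (g (n + 1))) (n : ℕ) : P (g n) := by
    simpa only [period] using h (n + 3)
  have hAF : ∀ n, g n ∉ M.A ∪ M.F := rotate (P := (· ∉ M.A ∪ M.F)) fun n h =>
    (M.isClique_neighborSet_inter h (opp (n + 1))).not_compl_adj
      ⟨(adj n).symm, period n ▸ adj (n + 3)⟩ ⟨adj (n + 1), (adj (n + 2)).symm⟩ (opp n)
  have hXY : ∀ n, g n ∉ M.X ∪ M.Y := rotate (P := (· ∉ M.X ∪ M.Y)) fun n h =>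
    (M.isClique_neighborSet_diff h).not_compl_adj ⟨(adj n).symm, hAF n⟩
      ⟨adj (n + 1), hAF (n + 2)⟩ (opp n)
  have hAFY (n : ℕ) : g n ∉ M.A ∪ M.F ∪ M.Y := fun h =>
    h.elim (hAF n) fun hY => hXY n (Or.inr hY)
  have hB (n : ℕ) (hn : g n ∉ ⋃ i, M.C i) : g n ∈ ⋃ i, M.B i :=
    ((M.mem_BX_or_mem_C (hAFY n)).resolve_right hn).resolve_right fun h => hXY n (Or.inl h)
  have hC (n : ℕ) := M.exists_mem_C_of_isInducedP3 ⟨adj n, adj (n + 1), opp n⟩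
    (hAFY n) (hAFY (n + 1)) (hAFY (n + 2))
  have hopp (n : ℕ) (hn : g n ∈ ⋃ i, M.C i) : g (n + 2) ∉ ⋃ i, M.C i := fun h =>
    M.isClique_CY.not_compl_adj (Or.inl hn) (Or.inl h) (opp n)
  -- two consecutive vertices lie in `⋃ Cᵢ`, the other two in `⋃ Bᵢ`
  obtain ⟨n, hn, hn₁⟩ : ∃ n, g n ∈ ⋃ i, M.C i ∧ g (n + 1) ∈ ⋃ i, M.C i := by
    obtain ⟨m, hm⟩ : ∃ m, g m ∈ ⋃ i, M.C i := by
      rcases hC 0 with h | h | h <;> exact ⟨_, h⟩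
    rcases hC (m + 1) with h | h | h
    exacts [⟨m, hm, h⟩, absurd h (hopp m hm), ⟨m + 3, h, (period m).symm ▸ hm⟩]
  exact M.not_compl_adj_of_nested (hB _ (hopp (n + 1) hn₁)) (hB _ (hopp n hn))
    ((period n).symm ▸ hn) hn₁ (adj (n + 2)).symm (adj (n + 3)) (adj (n + 1)).symm
    (opp (n + 1)).symm (opp (n + 2))

theorem indFree_cycleG (M : MansionPartition Q t) {k : ℕ} (hk : 6 ≤ k) : IndFree Q (cycleG k) := by
  refine ⟨fun f => ?_⟩
  let g : ℕ → W := fun n => f n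
  have adj (n : ℕ) : Q.Adj (g n) (g (n + 1)) := by
    simpa only [g, Nat.cast_succ] using
      f.map_adj_iff.2 (cycleG_adj_add_one (by omega) (n : ZMod k))
  have far (n d : ℕ) (hd : 2 ≤ d) (hdk : d + 2 ≤ k) : Qᶜ.Adj (g n) (g (n + d)) := by
    simpa only [g, Nat.cast_add] using
      f.map_compl_adj_iff.2 (cycleG_compl_adj_add hd hdk (n : ZMod k))
  have P3 (n : ℕ) : IsInducedP3 Q (g n) (g (n + 1)) (g (n + 2)) :=
    ⟨adj n, adj (n + 1), far n 2 le_rfl (by omega)⟩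
  have hA (n : ℕ) : g n ∉ M.A := fun h =>
    (M.isClique_compl_neighborSet (Or.inl h)).not_compl_adj (far n 2 le_rfl (by omega))
      (far n 4 (by omega) (by omega)) (far (n + 2) 2 le_rfl (by omega))
  have hAFY (n : ℕ) : g n ∉ M.A ∪ M.F ∪ M.Y :=
    M.notMem_AFY_of_compl_adj_isInducedP3 (P3 (n + 2)) (far n 2 le_rfl (by omega))
      (far n 3 (by omega) (by omega)) (far n 4 (by omega) (by omega)) (hA _) (hA _) (hA _)
  have hC (n : ℕ) := M.exists_mem_C_of_isInducedP3 (P3 n) (hAFY _) (hAFY _) (hAFY _)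
  obtain ⟨n, hn⟩ : ∃ n, g n ∈ ⋃ i, M.C i := by
    rcases hC 0 with h | h | h <;> exact ⟨_, h⟩
  rcases hC (n + 2) with h | h | h
  · exact M.isClique_CY.not_compl_adj (Or.inl hn) (Or.inl h) (far n 2 le_rfl (by omega))
  · exact M.isClique_CY.not_compl_adj (Or.inl hn) (Or.inl h) (far n 3 (by omega) (by omega))
  · exact M.isClique_CY.not_compl_adj (Or.inl hn) (Or.inl h) (far n 4 (by omega) (by omega))

theorem indFree_T0 (M : MansionPartition Q t) : IndFree Q T0 := by
  refine ⟨fun f => ?_⟩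
  have adj (a b : Fin 9) (h : T0.Adj a b) : Q.Adj (f a) (f b) := f.map_adj_iff.2 h
  have nonadj (a b : Fin 9) (h : T0ᶜ.Adj a b) : Qᶜ.Adj (f a) (f b) := f.map_compl_adj_iff.2 h
  -- the vertices `0, 2, 4, 5, 3, 7` of `T0` are `a₀, b₀, b₂, b₃, b₁, c₂`
  have ha₀ : f 0 ∈ M.A ∪ M.F := M.mem_A_union_F_of_compl_adj_neighbors
    (adj 0 2 (by simp only [T0, fromRel_adj]; decide))
    (adj 0 4 (by simp only [T0, fromRel_adj]; decide))
    (adj 0 5 (by simp only [T0, fromRel_adj]; decide))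
    (nonadj 2 4 (by simp only [compl_adj, T0, fromRel_adj]; decide))
    (nonadj 2 5 (by simp only [compl_adj, T0, fromRel_adj]; decide))
    (nonadj 4 5 (by simp only [compl_adj, T0, fromRel_adj]; decide))
  exact (M.isClique_compl_neighborSet ha₀).not_compl_adj
    (nonadj 0 3 (by simp only [compl_adj, T0, fromRel_adj]; decide))
    (nonadj 0 7 (by simp only [compl_adj, T0, fromRel_adj]; decide))
    (nonadj 3 7 (by simp only [compl_adj, T0, fromRel_adj]; decide))

theorem nonempty_pentagon_embedding (M : MansionPartition Q t) : Nonempty (pentagon t ↪g Q) := by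
  obtain ⟨a, ha⟩ := M.A_nonempty
  choose b hb hbC using M.exists_complete_C
  choose c hc using M.C_nonempty
  have hab (k : Fin t) : Q.Adj a (b k) := M.complete_A_B k a ha (b k) (hb k)
  have hac (k : Fin t) : ¬ Q.Adj a (c k) := M.anticomplete_A_C k a ha (c k) (hc k)
  have hbb (i k : Fin t) : ¬ Q.Adj (b i) (b k) := by
    rcases eq_or_ne i k with rfl | hik
    exacts [Q.irrefl, M.anticomplete_B_B i k hik _ (hb i) _ (hb k)]
  have hbc (i k : Fin t) : Q.Adj (b i) (c k) ↔ i = k := by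
    refine ⟨fun h => eq_of_adj_B_C (hb i) (hc k) h, ?_⟩
    rintro rfl
    exact hbC i (hc i)
  have hcc (i k : Fin t) : Q.Adj (c i) (c k) ↔ i ≠ k := by
    refine ⟨fun h hik => Q.irrefl (hik ▸ h), fun hik => ?_⟩
    exact M.complete_C_C i k hik _ (hc i) _ (hc k)
  have hinj : Function.Injective (Sum.elim (fun _ : Unit => a) (Sum.elim b c)) := by
    refine Function.injective_of_subsingleton _ |>.sumElim ?_ ?_
    · refine Function.Injective.sumElim (fun i k h => ?_) (fun i k h => ?_) fun i k =>
        (M.disjoint_B_C i k).ne_of_mem (hb i) (hc k)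
      · by_contra hik
        exact (M.disjoint_B_B i k hik).ne_of_mem (hb i) (hb k) h
      · by_contra hik
        exact (M.disjoint_C_C i k hik).ne_of_mem (hc i) (hc k) h
    · rintro - (k | k)
      exacts [(M.disjoint_A_B k).ne_of_mem ha (hb k), (M.disjoint_A_C k).ne_of_mem ha (hc k)]
  refine ⟨⟨⟨_, hinj⟩, ?_⟩⟩
  rintro (_ | i | i) (_ | k | k) <;>
    simp [pentagon, fromRel_adj, hab, hac, hbb, hbc, hcc, adj_comm]

variable [Nontrivial (Fin t)]

theorem exists_compl_adj_mem_C (M : MansionPartition Q t) {v : W} (hv : v ∉ M.CY) :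
    ∃ c ∈ ⋃ i, M.C i, Qᶜ.Adj v c := by
  rcases M.mem_cases v with h | ⟨i, h⟩ | ⟨i, h⟩ | h | h | h
  · obtain ⟨c, hc⟩ := M.C_nonempty M.j
    exact ⟨c, Set.mem_iUnion.2 ⟨_, hc⟩,
      compl_adj_of_anticompleteTo (M.disjoint_A_C _) (M.anticomplete_A_C _) h hc⟩
  · obtain ⟨k, hk⟩ := exists_ne i
    obtain ⟨c, hc⟩ := M.C_nonempty k
    exact ⟨c, Set.mem_iUnion.2 ⟨_, hc⟩,
      compl_adj_of_anticompleteTo (M.disjoint_B_C i k) (M.anticomplete_B_C i k hk.symm) h hc⟩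
  · exact absurd (Or.inl (Set.mem_iUnion.2 ⟨i, h⟩)) hv
  · obtain ⟨c, hc⟩ := M.C_nonempty M.j
    exact ⟨c, Set.mem_iUnion.2 ⟨_, hc⟩,
      compl_adj_of_anticompleteTo (M.disjoint_C_F _).symm M.anticomplete_F_Cj h hc⟩
  · obtain ⟨c, hc⟩ := M.C_nonempty M.j
    exact ⟨c, Set.mem_iUnion.2 ⟨_, hc⟩,
      compl_adj_of_anticompleteTo (M.disjoint_C_X _).symm (M.anticomplete_X_C _) h hc⟩
  · exact absurd (Or.inr h) hv

theorem compl_connected (M : MansionPartition Q t) : Qᶜ.Connected := by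
  obtain ⟨a, ha⟩ := M.A_nonempty
  have hC (c : W) (hc : c ∈ ⋃ i, M.C i) : Qᶜ.Adj c a :=
    let ⟨i, hi⟩ := Set.mem_iUnion.1 hc
    (compl_adj_of_anticompleteTo (M.disjoint_A_C i) (M.anticomplete_A_C i) ha hi).symm
  have hreach (v : W) : Qᶜ.Reachable v a := by
    by_cases hv : v ∈ M.CY
    · rcases hv with hv | hv
      · exact (hC v hv).reachable
      · exact (compl_adj_of_anticompleteTo M.disjoint_A_Y.symm M.anticomplete_Y_A hv ha).reachable
    · obtain ⟨c, hc, hvc⟩ := M.exists_compl_adj_mem_C hv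
      exact hvc.reachable.trans (hC c hc).reachable
  exact (connected_iff _).2 ⟨fun u v => (hreach u).trans (hreach v).symm, ⟨a⟩⟩

theorem not_isUniversal (M : MansionPartition Q t) (v : W) : ¬ IsUniversal Q v := by
  obtain ⟨a, ha⟩ := M.A_nonempty
  obtain ⟨c, hc⟩ := M.C_nonempty M.j
  have : Nontrivial W := ⟨⟨a, c, (M.disjoint_A_C M.j).ne_of_mem ha hc⟩⟩
  obtain ⟨w, hw⟩ := M.compl_connected.preconnected.exists_adj_of_nontrivial v
  exact fun hU => hw.2 (hU w hw.ne.symm)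

theorem exists_compl_adj_neighbors (M : MansionPartition Q t) (v : W) :
    ∃ u w, Q.Adj v u ∧ Q.Adj v w ∧ Qᶜ.Adj u w := by
  obtain ⟨a, ha⟩ := M.A_nonempty
  obtain ⟨f, hf⟩ := M.F_nonempty
  rcases M.mem_cases v with h | ⟨i, h⟩ | ⟨i, h⟩ | h | h | h
  · obtain ⟨k, hk⟩ := exists_ne M.j
    obtain ⟨b, hb⟩ := M.B_nonempty M.j
    obtain ⟨b', hb'⟩ := M.B_nonempty k
    exact ⟨b, b', M.complete_A_B _ v h b hb, M.complete_A_B _ v h b' hb',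
      compl_adj_of_anticompleteTo (M.disjoint_B_B _ _ hk.symm) (M.anticomplete_B_B _ _ hk.symm)
        hb hb'⟩
  · obtain ⟨c, hvc, hc⟩ := M.exists_adj_C i v h
    exact ⟨a, c, (M.complete_A_B i a ha v h).symm, hvc,
      compl_adj_of_anticompleteTo (M.disjoint_A_C i) (M.anticomplete_A_C i) ha hc⟩
  · obtain ⟨b, hb, hbC⟩ := M.exists_complete_C i
    obtain ⟨k, hk⟩ := exists_ne i
    obtain ⟨c, hc⟩ := M.C_nonempty k
    exact ⟨b, c, (hbC h).symm, M.complete_C_C i k hk.symm v h c hc,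
      compl_adj_of_anticompleteTo (M.disjoint_B_C i k) (M.anticomplete_B_C i k hk.symm) hb hc⟩
  · obtain ⟨k, hk⟩ := exists_ne M.j
    obtain ⟨c, hc⟩ := M.C_nonempty k
    exact ⟨a, c, M.complete_F_A v h a ha, M.complete_F_C k hk v h c hc,
      compl_adj_of_anticompleteTo (M.disjoint_A_C k) (M.anticomplete_A_C k) ha hc⟩
  · obtain ⟨b, hb⟩ := M.B_nonempty M.j
    exact ⟨f, b, (M.complete_F_X f hf v h).symm, M.complete_X_Bj v h b hb,
      compl_adj_of_anticompleteTo (M.disjoint_B_F _).symm M.anticomplete_F_Bj hf hb⟩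
  · obtain ⟨c, hc⟩ := M.C_nonempty M.j
    exact ⟨f, c, (M.complete_F_Y f hf v h).symm, M.complete_Y_C _ v h c hc,
      compl_adj_of_anticompleteTo (M.disjoint_C_F _).symm M.anticomplete_F_Cj hf hc⟩

theorem not_isSimplicial (M : MansionPartition Q t) (v : W) : ¬ IsSimplicial Q v := fun hS =>
  let ⟨_, _, hu, hw, huw⟩ := M.exists_compl_adj_neighbors v
  hS.not_compl_adj hu hw huw

end MansionPartition

theorem statement_9_general {W : Type} (t : ℕ) (ht : 3 ≤ t) (Q : SimpleGraph W)
    (hQ : IsTMansion t Q) :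
    (IndFree Q twoP3 ∧ IndFree Q (cycleG 4) ∧ IndFree Q (cycleG 6) ∧
      IndFree Q (cycleG 7) ∧ IndFree Q T0) ∧
    Nonempty (pentagon t ↪g Q) ∧
    Qᶜ.Connected ∧ (∀ v : W, ¬ IsSimplicial Q v) ∧ (∀ v : W, ¬ IsUniversal Q v) := by
  obtain ⟨M⟩ := hQ.nonempty_mansionPartition
  have : Nontrivial (Fin t) := Fin.nontrivial_iff_two_le.2 (by omega)
  exact ⟨⟨M.indFree_twoP3, M.indFree_cycleG_four, M.indFree_cycleG le_rfl,
    M.indFree_cycleG (by norm_num), M.indFree_T0⟩, M.nonempty_pentagon_embedding,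
    M.compl_connected, M.not_isSimplicial, M.not_isUniversal⟩

theorem statement_9 {W : Type} [Fintype W] (t : ℕ) (ht : 3 ≤ t) (Q : SimpleGraph W)
    (hQ : IsTMansion t Q) :
    (IndFree Q twoP3 ∧ IndFree Q (cycleG 4) ∧ IndFree Q (cycleG 6) ∧
      IndFree Q (cycleG 7) ∧ IndFree Q T0) ∧
    Nonempty (pentagon t ↪g Q) ∧
    Qᶜ.Connected ∧ (∀ v : W, ¬ IsSimplicial Q v) ∧ (∀ v : W, ¬ IsUniversal Q v) :=
  statement_9_general t ht Q hQ

end Paper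
end

section
/- Every 5-crown is (2P_3, C_4, C_6, C_7, 3-pentagon)-free. Moreover, every 5-crown is anticonnected and contains no universal and no simplicial vertices. -/
namespace Paper

open SimpleGraph

variable {V : Type} {W : Type}

/-!
Vertices in one part of a ring have nested closed neighbourhoods, and only consecutive parts are
joined. So an induced subgraph whose closed neighbourhoods are pairwise incomparable (`C₄`, `C₆`,
`C₇`, the 3-pentagon) meets each of the five parts at most once: this excludes the last three by
counting, and `C₄` because the 5-cycle of parts contains no 4-cycle. A stable set also meets each
part at most once, and any four of the five parts include one of the two complete pairs
`X (i* ± 1), X (i* ± 2)`; so a 5-crown is `4K₁`-free, hence `2P₃`-free. Parts at distance two are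
anticomplete, which makes the complement connected and excludes universal vertices; a vertex of
`X i` has neighbours in `X (i - 1)` and `X (i + 1)`, which are anticomplete, so it is not
simplicial.
-/

instance (n : ℕ) : DecidableRel (cycleG n).Adj := fun u v =>
  decidable_of_iff (u ≠ v ∧ (v = u + 1 ∨ u = v + 1)) Iff.rfl

/-- The adjacency of `pentagon t` as a `Bool`, so that `decide` can evaluate it. -/
def pentagonAdjBool {t : ℕ} : Unit ⊕ Fin t ⊕ Fin t → Unit ⊕ Fin t ⊕ Fin t → Bool
  | Sum.inl _, Sum.inr (Sum.inl _) => true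
  | Sum.inr (Sum.inl _), Sum.inl _ => true
  | Sum.inr (Sum.inl i), Sum.inr (Sum.inr j) => i = j
  | Sum.inr (Sum.inr j), Sum.inr (Sum.inl i) => i = j
  | Sum.inr (Sum.inr i), Sum.inr (Sum.inr j) => i != j
  | _, _ => false

theorem pentagonAdjBool_iff {t : ℕ} (u v : Unit ⊕ Fin t ⊕ Fin t) :
    pentagonAdjBool u v = true ↔ (pentagon t).Adj u v := by
  rcases u with _ | u | u <;> rcases v with _ | v | v <;>
    simp [pentagon, pentagonAdjBool, fromRel_adj]

instance (t : ℕ) : DecidableRel (pentagon t).Adj := fun u v =>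
  decidable_of_iff _ (pentagonAdjBool_iff u v)

def fourK1EmbeddingTwoP3 : fourK1 ↪g twoP3 where
  toFun := ![Sum.inl 0, Sum.inl 2, Sum.inr 0, Sum.inr 2]
  inj' := by decide
  map_rel_iff' := by
    intro a b
    fin_cases a <;> fin_cases b <;> simp [fourK1, twoP3, pathGraph_adj]

theorem IndFree.of_embedding {U U' : Type} {G : SimpleGraph V} {H : SimpleGraph U}
    {H' : SimpleGraph U'} (h : IndFree G H') (φ : H' ↪g H) : IndFree G H :=
  ⟨fun e => h.false (φ.trans e)⟩

/-- No closed neighbourhood of `H` is contained in another one. -/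
def ClosedNbhdsIncomparable {U : Type} (H : SimpleGraph U) : Prop :=
  ∀ u v, u ≠ v → ∃ w, (w = u ∨ H.Adj u w) ∧ w ≠ v ∧ ¬ H.Adj v w

theorem closedNbhdsIncomparable_cycleG_four : ClosedNbhdsIncomparable (cycleG 4) := by
  unfold ClosedNbhdsIncomparable; decide

theorem closedNbhdsIncomparable_cycleG_six : ClosedNbhdsIncomparable (cycleG 6) := by
  unfold ClosedNbhdsIncomparable; decide

theorem closedNbhdsIncomparable_cycleG_seven : ClosedNbhdsIncomparable (cycleG 7) := by
  unfold ClosedNbhdsIncomparable; decide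

theorem closedNbhdsIncomparable_pentagon_three : ClosedNbhdsIncomparable (pentagon 3) := by
  unfold ClosedNbhdsIncomparable; decide

section RingPartition

variable {U : Type} {k : ℕ} {Q : SimpleGraph W} {X : ZMod k → Set W} {v w : W} {i j : ZMod k}

theorem IsRingPartition.exists_mem (hX : IsRingPartition Q X) (v : W) : ∃ i, v ∈ X i :=
  Set.iUnion_eq_univ_iff.mp hX.2.1 v

theorem IsRingPartition.nonempty (hX : IsRingPartition Q X) (i : ZMod k) : (X i).Nonempty :=
  hX.2.2.1 i

theorem IsRingPartition.eq_of_mem_of_mem (hX : IsRingPartition Q X) (hi : v ∈ X i)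
    (hj : v ∈ X j) : i = j := by
  by_contra hne
  exact Set.disjoint_left.mp (hX.1 i j hne) hi hj

theorem IsRingPartition.adj_of_mem_of_mem (hX : IsRingPartition Q X) (hv : v ∈ X i)
    (hw : w ∈ X i) (hne : v ≠ w) : Q.Adj v w :=
  (hX.2.2.2.1 i v hv hw).resolve_left hne.symm

theorem IsRingPartition.eq_or_eq_or_eq_of_adj (hX : IsRingPartition Q X) (hv : v ∈ X i)
    (hw : w ∈ X j) (hadj : Q.Adj v w) : j = i - 1 ∨ j = i ∨ j = i + 1 := by
  rcases hX.2.2.2.2.2.1 i v hv (Set.mem_insert_of_mem _ hadj) with (h | h) | h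
  · exact Or.inl (hX.eq_of_mem_of_mem hw h)
  · exact Or.inr (Or.inl (hX.eq_of_mem_of_mem hw h))
  · exact Or.inr (Or.inr (hX.eq_of_mem_of_mem hw h))

theorem IsRingPartition.closedNbhd_subset_or_subset (hX : IsRingPartition Q X) (hv : v ∈ X i)
    (hw : w ∈ X i) :
    insert v (Q.neighborSet v) ⊆ insert w (Q.neighborSet w) ∨
      insert w (Q.neighborSet w) ⊆ insert v (Q.neighborSet v) :=
  hX.2.2.2.2.1 i v hv w hw

theorem IsRingPartition.compl_adj_of_mem (hX : IsRingPartition Q X) (hv : v ∈ X i)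
    (hw : w ∈ X j) (h₁ : j ≠ i - 1) (h₂ : j ≠ i) (h₃ : j ≠ i + 1) : Qᶜ.Adj v w := by
  refine (compl_adj Q v w).mpr ⟨?_, fun hadj => ?_⟩
  · rintro rfl
    exact h₂ (hX.eq_of_mem_of_mem hw hv)
  · rcases hX.eq_or_eq_or_eq_of_adj hv hw hadj with h | h | h <;> contradiction

theorem IsRingPartition.exists_adj_of_mem (hX : IsRingPartition Q X) (hv : v ∈ X j)
    (hj : j = i - 1 ∨ j = i + 1) (hji : j ≠ i) : ∃ u ∈ X i, Q.Adj u v := by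
  obtain ⟨u, hu, hdom⟩ := hX.2.2.2.2.2.2 i
  have hv' : v ∈ X (i - 1) ∪ X i ∪ X (i + 1) := by
    rcases hj with rfl | rfl
    exacts [Or.inl (Or.inl hv), Or.inr hv]
  rcases hdom hv' with rfl | hadj
  · exact absurd (hX.eq_of_mem_of_mem hv hu) hji
  · exact ⟨u, hu, hadj⟩

theorem IsRingPartition.injective_of_embedding (hX : IsRingPartition Q X) {H : SimpleGraph U}
    (hH : ClosedNbhdsIncomparable H) (e : H ↪g Q) {f : U → ZMod k}
    (hf : ∀ u, e u ∈ X (f u)) : Function.Injective f := by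
  have key : ∀ u v, f u = f v → u ≠ v →
      ¬ insert (e u) (Q.neighborSet (e u)) ⊆ insert (e v) (Q.neighborSet (e v)) := by
    intro u v _ hne hsub
    obtain ⟨w, hw, hwv, hvw⟩ := hH u v hne
    have hmem : e w ∈ insert (e u) (Q.neighborSet (e u)) := by
      rcases hw with rfl | hw
      exacts [Set.mem_insert _ _, Set.mem_insert_of_mem _ (e.map_adj_iff.mpr hw)]
    rcases hsub hmem with h | h
    exacts [hwv (e.injective h), hvw (e.map_adj_iff.mp h)]
  intro u v huv
  by_contra hne
  have hv : e v ∈ X (f u) := huv ▸ hf v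
  rcases hX.closedNbhd_subset_or_subset (hf u) hv with hsub | hsub
  exacts [key u v huv hne hsub, key v u huv.symm (Ne.symm hne) hsub]

theorem IsRingPartition.indFree_of_card_lt [NeZero k] [Fintype U] (hX : IsRingPartition Q X)
    {H : SimpleGraph U} (hH : ClosedNbhdsIncomparable H) (hcard : k < Fintype.card U) :
    IndFree Q H := by
  refine ⟨fun e => ?_⟩
  choose f hf using fun u => hX.exists_mem (e u)
  have := Fintype.card_le_of_injective f (hX.injective_of_embedding hH e hf)
  rw [ZMod.card] at this
  omega

end RingPartition

section FiveRing

variable {Q : SimpleGraph W} {X : ZMod 5 → Set W}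

set_option maxRecDepth 10000 in
theorem ZMod.five_no_four_cycle : ∀ f : ZMod 4 → ZMod 5, Function.Injective f →
    ¬ ∀ i, f (i + 1) = f i - 1 ∨ f (i + 1) = f i ∨ f (i + 1) = f i + 1 := by
  decide

theorem IsRingPartition.indFree_cycleG_four (hX : IsRingPartition Q X) :
    IndFree Q (cycleG 4) := by
  refine ⟨fun e => ?_⟩
  choose f hf using fun u => hX.exists_mem (e u)
  have hstep : ∀ i : ZMod 4, (cycleG 4).Adj i (i + 1) := by decide
  exact ZMod.five_no_four_cycle f
    (hX.injective_of_embedding closedNbhdsIncomparable_cycleG_four e hf)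
    fun i => hX.eq_or_eq_or_eq_of_adj (hf i) (hf (i + 1)) (e.map_adj_iff.mpr (hstep i))

theorem ZMod.five_mem_pair_of_four_le_card : ∀ (s : ZMod 5) (T : Finset (ZMod 5)), 4 ≤ T.card →
    (s + 1 ∈ T ∧ s + 2 ∈ T) ∨ (s - 1 ∈ T ∧ s - 2 ∈ T) := by
  decide

theorem IsRingPartition.indFree_fourK1 (hX : IsRingPartition Q X) {s : ZMod 5}
    (hs₁ : CompleteTo Q (X (s - 1)) (X (s - 2))) (hs₂ : CompleteTo Q (X (s + 1)) (X (s + 2))) :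
    IndFree Q fourK1 := by
  refine ⟨fun e => ?_⟩
  choose f hf using fun u => hX.exists_mem (e u)
  have hinj : Function.Injective f := by
    intro u v huv
    by_contra hne
    exact e.map_adj_iff.mp (hX.adj_of_mem_of_mem (hf u) (huv ▸ hf v) (e.injective.ne hne))
  have hcard : (Finset.univ.image f).card = 4 := by
    rw [Finset.card_image_of_injective _ hinj, Finset.card_univ, Fintype.card_fin]
  have hadj : ∀ {i j : Fin 4} {a b : ZMod 5}, CompleteTo Q (X a) (X b) →
      f i = a → f j = b → False := fun hc hi hj =>
    e.map_adj_iff.mp (hc _ (hi ▸ hf _) _ (hj ▸ hf _))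
  rcases ZMod.five_mem_pair_of_four_le_card s _ hcard.ge with ⟨h₁, h₂⟩ | ⟨h₁, h₂⟩ <;>
    obtain ⟨i, -, hi⟩ := Finset.mem_image.mp h₁ <;> obtain ⟨j, -, hj⟩ := Finset.mem_image.mp h₂
  exacts [hadj hs₂ hi hj, hadj hs₁ hi hj]

theorem IsRingPartition.compl_connected (hX : IsRingPartition Q X) : Qᶜ.Connected := by
  choose c hc using hX.nonempty
  have far : ∀ {v w : W} {i j : ZMod 5}, v ∈ X i → w ∈ X j → j ≠ i - 1 ∧ j ≠ i ∧ j ≠ i + 1 →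
      Qᶜ.Reachable v w := fun hv hw ⟨h₁, h₂, h₃⟩ =>
    (hX.compl_adj_of_mem hv hw h₁ h₂ h₃).reachable
  refine (connected_iff_exists_forall_reachable _).mpr ⟨c 0, fun v => ?_⟩
  obtain ⟨i, hi⟩ := hX.exists_mem v
  have hcases : ∀ i : ZMod 5, i = 0 ∨ i = 1 ∨ i = 2 ∨ i = 3 ∨ i = 4 := by decide
  rcases hcases i with rfl | rfl | rfl | rfl | rfl
  · exact (far (hc 0) (hc 2) (by decide)).trans (far (hc 2) hi (by decide))
  · exact (far (hc 0) (hc 3) (by decide)).trans (far (hc 3) hi (by decide))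
  · exact far (hc 0) hi (by decide)
  · exact far (hc 0) hi (by decide)
  · exact (far (hc 0) (hc 2) (by decide)).trans (far (hc 2) hi (by decide))

theorem IsRingPartition.not_isUniversal (hX : IsRingPartition Q X) (v : W) :
    ¬ IsUniversal Q v := by
  intro hv
  obtain ⟨i, hi⟩ := hX.exists_mem v
  obtain ⟨w, hw⟩ := hX.nonempty (i + 2)
  have hfar : ∀ i : ZMod 5, i + 2 ≠ i - 1 ∧ i + 2 ≠ i ∧ i + 2 ≠ i + 1 := by decide
  obtain ⟨hne, hnadj⟩ := (compl_adj Q v w).mp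
    (hX.compl_adj_of_mem hi hw (hfar i).1 (hfar i).2.1 (hfar i).2.2)
  exact hnadj (hv w (Ne.symm hne))

theorem IsRingPartition.not_isSimplicial (hX : IsRingPartition Q X) (v : W) :
    ¬ IsSimplicial Q v := by
  intro hv
  obtain ⟨i, hi⟩ := hX.exists_mem v
  have hz : ∀ i : ZMod 5, i ≠ i + 1 ∧ i ≠ i - 1 ∧
      (i - 1 ≠ i + 1 - 1 ∧ i - 1 ≠ i + 1 ∧ i - 1 ≠ i + 1 + 1) := by decide
  obtain ⟨hne₁, hne₂, hfar₁, hfar₂, hfar₃⟩ := hz i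
  obtain ⟨u, hu, hadj⟩ := hX.exists_adj_of_mem hi (Or.inl (add_sub_cancel_right i 1).symm) hne₁
  obtain ⟨u', hu', hadj'⟩ := hX.exists_adj_of_mem hi (Or.inr (sub_add_cancel i 1).symm) hne₂
  obtain ⟨hne, hnadj⟩ := (compl_adj Q u u').mp (hX.compl_adj_of_mem hu hu' hfar₁ hfar₂ hfar₃)
  exact hnadj (hv hadj.symm hadj'.symm hne)

end FiveRing

theorem statement_10_general {W : Type} (Q : SimpleGraph W)
    (hQ : IsFiveCrown Q) :
    (IndFree Q twoP3 ∧ IndFree Q (cycleG 4) ∧ IndFree Q (cycleG 6) ∧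
      IndFree Q (cycleG 7) ∧ IndFree Q (pentagon 3)) ∧
    Qᶜ.Connected ∧ (∀ v : W, ¬ IsUniversal Q v) ∧ (∀ v : W, ¬ IsSimplicial Q v) := by
  obtain ⟨X, hX, s, hs₁, hs₂⟩ := hQ
  refine ⟨⟨(hX.indFree_fourK1 hs₁ hs₂).of_embedding fourK1EmbeddingTwoP3, hX.indFree_cycleG_four,
    hX.indFree_of_card_lt closedNbhdsIncomparable_cycleG_six (by simp),
    hX.indFree_of_card_lt closedNbhdsIncomparable_cycleG_seven (by simp),
    hX.indFree_of_card_lt closedNbhdsIncomparable_pentagon_three (by simp)⟩,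
    hX.compl_connected, hX.not_isUniversal, hX.not_isSimplicial⟩

theorem statement_10 {W : Type} [Fintype W] (Q : SimpleGraph W)
    (hQ : IsFiveCrown Q) :
    (IndFree Q twoP3 ∧ IndFree Q (cycleG 4) ∧ IndFree Q (cycleG 6) ∧
      IndFree Q (cycleG 7) ∧ IndFree Q (pentagon 3)) ∧
    Qᶜ.Connected ∧ (∀ v : W, ¬ IsUniversal Q v) ∧ (∀ v : W, ¬ IsSimplicial Q v) :=
  statement_10_general Q hQ

end Paper
end

section
/- Every (2P_3, C_4, C_6, C_7, 3-pentagon)-free graph is (3PC, proper wheel)-free, i.e., it contains no induced subgraph that is a theta, a pyramid, a prism, or a proper wheel. -/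
namespace Paper

open SimpleGraph

variable {V : Type} {W : Type}

/-- A theta: two nonadjacent vertices joined by three internally disjoint induced paths of
length at least two, with no other vertices or edges. -/
def IsTheta (H : SimpleGraph W) : Prop :=
  ∃ (a b : W) (P₁ P₂ P₃ : H.Walk a b),
    a ≠ b ∧ ¬ H.Adj a b ∧
    P₁.IsPath ∧ P₂.IsPath ∧ P₃.IsPath ∧
    2 ≤ P₁.length ∧ 2 ≤ P₂.length ∧ 2 ≤ P₃.length ∧
    (∀ v, v ∈ P₁.support → v ∈ P₂.support → v = a ∨ v = b) ∧
    (∀ v, v ∈ P₁.support → v ∈ P₃.support → v = a ∨ v = b) ∧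
    (∀ v, v ∈ P₂.support → v ∈ P₃.support → v = a ∨ v = b) ∧
    (∀ v : W, v ∈ P₁.support ∨ v ∈ P₂.support ∨ v ∈ P₃.support) ∧
    (∀ u v : W, H.Adj u v →
      s(u, v) ∈ P₁.edges ∨ s(u, v) ∈ P₂.edges ∨ s(u, v) ∈ P₃.edges)

/-- A pyramid: a triangle `b₁b₂b₃`, an apex `a`, and three paths from `a` to the `bᵢ`,
pairwise sharing only `a`, at most one of length one, with no other vertices or edges. -/
def IsPyramid (H : SimpleGraph W) : Prop :=
  ∃ (a b₁ b₂ b₃ : W) (P₁ : H.Walk a b₁) (P₂ : H.Walk a b₂) (P₃ : H.Walk a b₃),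
    H.Adj b₁ b₂ ∧ H.Adj b₁ b₃ ∧ H.Adj b₂ b₃ ∧
    P₁.IsPath ∧ P₂.IsPath ∧ P₃.IsPath ∧
    1 ≤ P₁.length ∧ 1 ≤ P₂.length ∧ 1 ≤ P₃.length ∧
    ((2 ≤ P₁.length ∧ 2 ≤ P₂.length) ∨ (2 ≤ P₁.length ∧ 2 ≤ P₃.length) ∨
      (2 ≤ P₂.length ∧ 2 ≤ P₃.length)) ∧
    (∀ v, v ∈ P₁.support → v ∈ P₂.support → v = a) ∧
    (∀ v, v ∈ P₁.support → v ∈ P₃.support → v = a) ∧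
    (∀ v, v ∈ P₂.support → v ∈ P₃.support → v = a) ∧
    (∀ v : W, v ∈ P₁.support ∨ v ∈ P₂.support ∨ v ∈ P₃.support) ∧
    (∀ u v : W, H.Adj u v →
      s(u, v) ∈ P₁.edges ∨ s(u, v) ∈ P₂.edges ∨ s(u, v) ∈ P₃.edges ∨
      s(u, v) = s(b₁, b₂) ∨ s(u, v) = s(b₁, b₃) ∨ s(u, v) = s(b₂, b₃))

/-- A prism: two vertex-disjoint triangles joined by three vertex-disjoint paths,
with no other vertices or edges. -/
def IsPrism (H : SimpleGraph W) : Prop :=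
  ∃ (a₁ a₂ a₃ b₁ b₂ b₃ : W) (P₁ : H.Walk a₁ b₁) (P₂ : H.Walk a₂ b₂) (P₃ : H.Walk a₃ b₃),
    H.Adj a₁ a₂ ∧ H.Adj a₁ a₃ ∧ H.Adj a₂ a₃ ∧
    H.Adj b₁ b₂ ∧ H.Adj b₁ b₃ ∧ H.Adj b₂ b₃ ∧
    P₁.IsPath ∧ P₂.IsPath ∧ P₃.IsPath ∧
    1 ≤ P₁.length ∧ 1 ≤ P₂.length ∧ 1 ≤ P₃.length ∧
    (∀ v, ¬ (v ∈ P₁.support ∧ v ∈ P₂.support)) ∧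
    (∀ v, ¬ (v ∈ P₁.support ∧ v ∈ P₃.support)) ∧
    (∀ v, ¬ (v ∈ P₂.support ∧ v ∈ P₃.support)) ∧
    (∀ v : W, v ∈ P₁.support ∨ v ∈ P₂.support ∨ v ∈ P₃.support) ∧
    (∀ u v : W, H.Adj u v →
      s(u, v) ∈ P₁.edges ∨ s(u, v) ∈ P₂.edges ∨ s(u, v) ∈ P₃.edges ∨
      s(u, v) = s(a₁, a₂) ∨ s(u, v) = s(a₁, a₃) ∨ s(u, v) = s(a₂, a₃) ∨
      s(u, v) = s(b₁, b₂) ∨ s(u, v) = s(b₁, b₃) ∨ s(u, v) = s(b₂, b₃))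

/-- A proper wheel: a hole (an induced cycle on at least four vertices, covering all vertices
but one) plus one additional vertex `v` with at least three neighbors on the hole, such that
the wheel is neither a universal wheel nor a twin wheel. -/
def IsProperWheel (H : SimpleGraph W) : Prop :=
  ∃ (v : W) (n : ℕ) (e : cycleG n ↪g H),
    4 ≤ n ∧ Set.range ⇑e = {v}ᶜ ∧
    3 ≤ (H.neighborSet v).ncard ∧
    H.neighborSet v ≠ {v}ᶜ ∧
    ¬ ∃ i : ZMod n, H.neighborSet v = {e i, e (i + 1), e (i + 2)}


/-!
In a (2P₃, C₄, C₆, C₇)-free graph every hole has length 5, since a hole of length at least 8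
contains an induced 2P₃. Any two of the three paths of a 3PC close up to a hole (directly in a
theta, through one triangle edge in a pyramid, through both triangle edges in a prism), so if the
paths have lengths ℓ₁, ℓ₂, ℓ₃, the sums ℓᵢ + ℓⱼ are all 5 (theta), all 4 (pyramid) or all 3
(prism). For a theta or a prism, adding them gives 2(ℓ₁ + ℓ₂ + ℓ₃) = 15 or 9; for a pyramid
it forces ℓ₁ = ℓ₂ = ℓ₃ = 2, and such a pyramid is a 3-pentagon. The rim of a proper wheel is a
hole, hence a 5-cycle, and a centre with three or four neighbours on it that are not three
consecutive ones is adjacent to two vertices at distance two on the rim but not to their common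
neighbour, which gives a C₄.
-/

instance inst_s11 (n : ℕ) : DecidableRel (cycleG n).Adj :=
  fun a b => inferInstanceAs (Decidable (a ≠ b ∧ (b = a + 1 ∨ a = b + 1)))

instance inst_s11_2 (t : ℕ) : DecidableRel (pentagon t).Adj := fun u v => by
  unfold pentagon; rw [fromRel_adj]
  rcases u with _ | i | i <;> rcases v with _ | j | j <;> dsimp only <;> infer_instance

lemma IndFree.induce {G : SimpleGraph V} {K : SimpleGraph W} (h : IndFree G K) (S : Set V) :
    IndFree (G.induce S) K :=
  ⟨fun f => h.elim ((Embedding.induce S).comp f)⟩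

section Cycles

lemma cycleG_adj_iff_val {m : ℕ} [NeZero m] {s t : ZMod m} :
    (cycleG m).Adj s t ↔ s ≠ t ∧ (t.val = (s.val + 1) % m ∨ s.val = (t.val + 1) % m) := by
  have key : ∀ x y : ZMod m, y = x + 1 ↔ y.val = (x.val + 1) % m := fun x y => by
    rw [← ZMod.val_natCast, Nat.cast_succ, ZMod.natCast_zmod_val, ZMod.val_injective m |>.eq_iff]
  rw [cycleG, fromRel_adj, key, key]

lemma cycleG_adj_natCast {m i j : ℕ} (hi : i + 1 < m) (hj : j + 1 < m) :
    (cycleG m).Adj i j ↔ j = i + 1 ∨ i = j + 1 := by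
  simp only [cycleG, fromRel_adj, ne_eq, ← Nat.cast_succ, ZMod.natCast_eq_natCast_iff',
    Nat.mod_eq_of_lt hi, Nat.mod_eq_of_lt hj, Nat.mod_eq_of_lt (Nat.lt_of_succ_lt hi),
    Nat.mod_eq_of_lt (Nat.lt_of_succ_lt hj)]
  omega

def twoP3EmbeddingCycleG {m : ℕ} (hm : 8 ≤ m) : twoP3 ↪g cycleG m where
  toFun := Sum.elim (fun k => (k.val : ZMod m)) (fun k => ((k.val + 4 : ℕ) : ZMod m))
  inj' := by
    rintro (k | k) (l | l) h <;>
      simp only [Sum.elim_inl, Sum.elim_inr, ZMod.natCast_eq_natCast_iff'] at h <;>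
      rw [Nat.mod_eq_of_lt (by omega), Nat.mod_eq_of_lt (by omega)] at h <;>
      first | (exact congrArg _ (Fin.ext (by omega))) | omega
  map_rel_iff' := by
    rintro (k | k) (l | l) <;>
    · change (cycleG m).Adj ((_ : ℕ) : ZMod m) ((_ : ℕ) : ZMod m) ↔ _
      rw [cycleG_adj_natCast (by omega) (by omega)]
      simp [twoP3, pathGraph_adj, Fin.ext_iff]
      omega

end Cycles

section Holes
variable {H : SimpleGraph W} {u v : W}

def HolesHaveLengthFive (H : SimpleGraph W) : Prop :=
  ∀ ⦃m : ℕ⦄, 4 ≤ m → (cycleG m ↪g H) → m = 5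

theorem holesHaveLengthFive_of_indFree (h2P3 : IndFree H twoP3) (hC4 : IndFree H (cycleG 4))
    (hC6 : IndFree H (cycleG 6)) (hC7 : IndFree H (cycleG 7)) : HolesHaveLengthFive H := by
  intro m hm e
  obtain rfl | rfl | rfl | rfl | hm8 : m = 4 ∨ m = 5 ∨ m = 6 ∨ m = 7 ∨ 8 ≤ m := by omega
  · exact hC4.elim e
  · rfl
  · exact hC6.elim e
  · exact hC7.elim e
  · exact h2P3.elim ((twoP3EmbeddingCycleG hm8).trans e)

lemma _root_.SimpleGraph.Walk.getVert_mod_length (c : H.Walk u u) {n : ℕ} (hn : n ≤ c.length) :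
    c.getVert (n % c.length) = c.getVert n := by
  rcases hn.lt_or_eq with hn | rfl
  · rw [Nat.mod_eq_of_lt hn]
  · rw [Nat.mod_self, Walk.getVert_zero, Walk.getVert_length]

lemma _root_.SimpleGraph.Walk.IsPath.start_notMem_support_tail {p : H.Walk u v}
    (hp : p.IsPath) : u ∉ p.support.tail := by
  have := hp.support_nodup
  rw [← p.cons_tail_support, List.nodup_cons] at this
  exact this.1

lemma _root_.SimpleGraph.Walk.IsPath.end_ne_start {p : H.Walk u v} (hp : p.IsPath)
    (h : 1 ≤ p.length) : v ≠ u := fun hvu => by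
  have := (hp.getVert_eq_start_iff le_rfl).mp (by rw [p.getVert_length, hvu])
  omega

theorem exists_cycleG_embedding_of_isCycle {m : ℕ} {c : H.Walk u u} (hc : c.IsCycle)
    (hchord : ∀ x ∈ c.support, ∀ y ∈ c.support, H.Adj x y → s(x, y) ∈ c.edges)
    (hm : c.length = m) :
    ∃ e : cycleG m ↪g H, ∀ k, e k = c.getVert k.val := by
  subst hm
  have : NeZero c.length := ⟨by have := hc.three_le_length; omega⟩
  have hinj : ∀ i < c.length, ∀ j < c.length, c.getVert i = c.getVert j → i = j :=
    fun i hi j hj h => hc.getVert_injOn' (by simp only [Set.mem_ofPred_eq]; omega)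
      (by simp only [Set.mem_ofPred_eq]; omega) h
  have hsucc : ∀ i < c.length, H.Adj (c.getVert i) (c.getVert ((i + 1) % c.length)) :=
    fun i hi => c.getVert_mod_length hi ▸ c.adj_getVert_succ hi
  refine ⟨⟨⟨fun k => c.getVert k.val, fun s t h => ZMod.val_injective _ <|
    hinj _ (ZMod.val_lt s) _ (ZMod.val_lt t) h⟩, fun {s t} => ?_⟩, fun _ => rfl⟩
  change H.Adj (c.getVert s.val) (c.getVert t.val) ↔ _
  rw [cycleG_adj_iff_val]
  constructor
  · intro hadj
    refine ⟨fun h => hadj.ne (h ▸ rfl), ?_⟩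
    obtain ⟨i, hi, he⟩ := (Walk.mk_mem_edges_iff_exists c).mp
      (hchord _ (c.getVert_mem_support _) _ (c.getVert_mem_support _) hadj)
    rw [← c.getVert_mod_length hi, Sym2.eq_iff] at he
    have := Nat.mod_lt (i + 1) (NeZero.pos c.length)
    rcases he with ⟨h₁, h₂⟩ | ⟨h₁, h₂⟩
    · left
      rw [← hinj _ hi _ (ZMod.val_lt s) h₁, ← hinj _ this _ (ZMod.val_lt t) h₂]
    · right
      rw [← hinj _ hi _ (ZMod.val_lt t) h₁, ← hinj _ this _ (ZMod.val_lt s) h₂]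
  · rintro ⟨-, h | h⟩
    · rw [h]; exact hsucc _ (ZMod.val_lt s)
    · rw [h]; exact (hsucc _ (ZMod.val_lt t)).symm

theorem exists_cycleG_embedding_of_isPath {m : ℕ} {p q : H.Walk u v} (hp : p.IsPath)
    (hq : q.IsPath) (hpq : ∀ x ∈ p.support, x ∈ q.support → x = u ∨ x = v)
    (hlen : 2 ≤ p.length ∨ 2 ≤ q.length)
    (hchord : ∀ x y, x ∈ p.support ∨ x ∈ q.support → y ∈ p.support ∨ y ∈ q.support →
      H.Adj x y → s(x, y) ∈ p.edges ∨ s(x, y) ∈ q.edges)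
    (hm : p.length + q.length = m) :
    ∃ e : cycleG m ↪g H, ∀ k, e k = (p.append q.reverse).getVert k.val := by
  have hdisj : p.support.tail.Disjoint q.reverse.support.tail := by
    intro x hxp hxq
    have hxq' : x ∈ q.support := by simpa using List.mem_of_mem_tail hxq
    rcases hpq x (List.mem_of_mem_tail hxp) hxq' with rfl | rfl
    · exact hp.start_notMem_support_tail hxp
    · exact hq.reverse.start_notMem_support_tail hxq
  have hc := hp.isCycle_append hq.reverse hdisj (by simp only [Walk.length_reverse]; omega)
  refine exists_cycleG_embedding_of_isCycle hc ?_ (by simpa using hm)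
  simp only [Walk.mem_support_append_iff, Walk.support_reverse, List.mem_reverse,
    Walk.edges_append, Walk.edges_reverse, List.mem_append]
  exact fun x hx y hy => hchord x y hx hy

lemma HolesHaveLengthFive.length_add_length (hH : HolesHaveLengthFive H) {p q : H.Walk u v}
    (hp : p.IsPath) (hq : q.IsPath) (hpq : ∀ x ∈ p.support, x ∈ q.support → x = u ∨ x = v)
    (hchord : ∀ x y, x ∈ p.support ∨ x ∈ q.support → y ∈ p.support ∨ y ∈ q.support →
      H.Adj x y → s(x, y) ∈ p.edges ∨ s(x, y) ∈ q.edges)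
    (h4 : 4 ≤ p.length + q.length) : p.length + q.length = 5 :=
  hH h4 (exists_cycleG_embedding_of_isPath hp hq hpq (by omega) hchord rfl).choose

end Holes

section Theta
variable {H : SimpleGraph W}

lemma theta_length_add_length (hH : HolesHaveLengthFive H) {a b : W} (hab : ¬ H.Adj a b)
    {P Q R : H.Walk a b} (hP : P.IsPath) (hQ : Q.IsPath) (hP2 : 2 ≤ P.length)
    (hQ2 : 2 ≤ Q.length)
    (hPQ : ∀ v, v ∈ P.support → v ∈ Q.support → v = a ∨ v = b)
    (hPR : ∀ v, v ∈ P.support → v ∈ R.support → v = a ∨ v = b)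
    (hQR : ∀ v, v ∈ Q.support → v ∈ R.support → v = a ∨ v = b)
    (hedge : ∀ x y, H.Adj x y → s(x, y) ∈ P.edges ∨ s(x, y) ∈ Q.edges ∨ s(x, y) ∈ R.edges) :
    P.length + Q.length = 5 := by
  refine hH.length_add_length hP hQ hPQ (fun x y hx hy hxy => ?_) (by omega)
  refine (hedge x y hxy).imp_right (Or.resolve_right · fun hR => ?_)
  have hend : ∀ z, z ∈ P.support ∨ z ∈ Q.support → z ∈ R.support → z = a ∨ z = b :=
    fun z hz hzR => hz.elim (hPR z · hzR) (hQR z · hzR)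
  rcases hend x hx (R.fst_mem_support_of_mem_edges hR) with rfl | rfl <;>
    rcases hend y hy (R.snd_mem_support_of_mem_edges hR) with rfl | rfl
  exacts [hxy.ne rfl, hab hxy, hab hxy.symm, hxy.ne rfl]

theorem not_isTheta (hH : HolesHaveLengthFive H) : ¬ IsTheta H := by
  rintro ⟨a, b, P₁, P₂, P₃, -, hab, hP₁, hP₂, hP₃, hl₁, hl₂, hl₃, h₁₂, h₁₃, h₂₃, -, hedge⟩
  have := theta_length_add_length hH hab hP₁ hP₂ hl₁ hl₂ h₁₂ h₁₃ h₂₃ hedge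
  have := theta_length_add_length hH hab hP₁ hP₃ hl₁ hl₃ h₁₃ h₁₂ (fun v h₃ h₂ => h₂₃ v h₂ h₃)
    fun x y h => (hedge x y h).imp_right Or.symm
  have := theta_length_add_length hH hab hP₂ hP₃ hl₂ hl₃ h₂₃ (fun v h₂ h₁ => h₁₂ v h₁ h₂)
    (fun v h₃ h₁ => h₁₃ v h₁ h₃) fun x y h => or_rotate.mp (hedge x y h)
  omega

end Theta

section Prism
variable {H : SimpleGraph W}

lemma prism_length_add_length (hH : HolesHaveLengthFive H) {a₁ a₂ a₃ b₁ b₂ b₃ : W}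
    {P : H.Walk a₁ b₁} {Q : H.Walk a₂ b₂} {R : H.Walk a₃ b₃}
    (ha₁₂ : H.Adj a₁ a₂) (hb₁₂ : H.Adj b₁ b₂) (hP : P.IsPath) (hQ : Q.IsPath)
    (hP1 : 1 ≤ P.length) (hQ1 : 1 ≤ Q.length)
    (hPQ : ∀ v, ¬ (v ∈ P.support ∧ v ∈ Q.support))
    (hPR : ∀ v, ¬ (v ∈ P.support ∧ v ∈ R.support))
    (hQR : ∀ v, ¬ (v ∈ Q.support ∧ v ∈ R.support))
    (hedge : ∀ x y, H.Adj x y →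
      s(x, y) ∈ P.edges ∨ s(x, y) ∈ Q.edges ∨ s(x, y) ∈ R.edges ∨
      s(x, y) = s(a₁, a₂) ∨ s(x, y) = s(a₁, a₃) ∨ s(x, y) = s(a₂, a₃) ∨
      s(x, y) = s(b₁, b₂) ∨ s(x, y) = s(b₁, b₃) ∨ s(x, y) = s(b₂, b₃)) :
    P.length + Q.length = 3 := by
  have hp := hP.concat (fun h => hPQ b₂ ⟨h, Q.end_mem_support⟩) hb₁₂
  have hq := hQ.cons (h := ha₁₂) fun h => hPQ a₁ ⟨P.start_mem_support, h⟩
  suffices (P.concat hb₁₂).length + (Walk.cons ha₁₂ Q).length = 5 by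
    simp only [Walk.length_concat, Walk.length_cons] at this; omega
  refine hH.length_add_length hp hq ?_ ?_
    (by simp only [Walk.length_concat, Walk.length_cons]; omega)
  · simp only [Walk.support_concat, Walk.support_cons, List.mem_append, List.mem_cons,
      List.not_mem_nil, or_false]
    rintro x (hx | rfl) (rfl | hy)
    exacts [Or.inl rfl, (hPQ x ⟨hx, hy⟩).elim, Or.inr rfl, Or.inr rfl]
  · simp only [Walk.support_concat, Walk.support_cons, Walk.edges_concat, Walk.edges_cons,
      List.concat_eq_append, List.mem_append, List.mem_cons, List.not_mem_nil, or_false]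
    have hPQ' : ∀ z, (z ∈ P.support ∨ z = b₂) ∨ z = a₁ ∨ z ∈ Q.support → z ∉ R.support := by
      rintro z ((h | rfl) | (rfl | h)) hR
      exacts [hPR z ⟨h, hR⟩, hQR z ⟨Q.end_mem_support, hR⟩, hPR z ⟨P.start_mem_support, hR⟩,
        hQR z ⟨h, hR⟩]
    intro x y hx hy hxy
    have hR : ∀ c ∈ R.support, c ∉ s(x, y) := by
      intro c hcR hc
      rcases Sym2.mem_iff.mp hc with rfl | rfl
      exacts [hPQ' c hx hcR, hPQ' c hy hcR]
    rcases hedge x y hxy with h | h | h | h | h | h | h | h | h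
    · exact Or.inl (Or.inl h)
    · exact Or.inr (Or.inr h)
    · exact (hR x (R.fst_mem_support_of_mem_edges h) (Sym2.mem_mk_left _ _)).elim
    · exact Or.inr (Or.inl h)
    · exact (hR a₃ R.start_mem_support (h ▸ Sym2.mem_mk_right _ _)).elim
    · exact (hR a₃ R.start_mem_support (h ▸ Sym2.mem_mk_right _ _)).elim
    · exact Or.inl (Or.inr h)
    · exact (hR b₃ R.end_mem_support (h ▸ Sym2.mem_mk_right _ _)).elim
    · exact (hR b₃ R.end_mem_support (h ▸ Sym2.mem_mk_right _ _)).elim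

theorem not_isPrism (hH : HolesHaveLengthFive H) : ¬ IsPrism H := by
  rintro ⟨a₁, a₂, a₃, b₁, b₂, b₃, P₁, P₂, P₃, ha₁₂, ha₁₃, ha₂₃, hb₁₂, hb₁₃, hb₂₃,
    hP₁, hP₂, hP₃, hl₁, hl₂, hl₃, h₁₂, h₁₃, h₂₃, -, hedge⟩
  have := prism_length_add_length hH ha₁₂ hb₁₂ hP₁ hP₂ hl₁ hl₂ h₁₂ h₁₃ h₂₃ hedge
  have := prism_length_add_length hH ha₁₃ hb₁₃ hP₁ hP₃ hl₁ hl₃ h₁₃ h₁₂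
    (fun v h => h₂₃ v h.symm) fun x y h => by
      rw [Sym2.eq_swap (a := a₃), Sym2.eq_swap (a := b₃)]; have := hedge x y h; tauto
  have := prism_length_add_length hH ha₂₃ hb₂₃ hP₂ hP₃ hl₂ hl₃ h₂₃
    (fun v h => h₁₂ v h.symm) (fun v h => h₁₃ v h.symm) fun x y h => by
      rw [Sym2.eq_swap (a := a₂) (b := a₁), Sym2.eq_swap (a := a₃) (b := a₁),
        Sym2.eq_swap (a := b₂) (b := b₁), Sym2.eq_swap (a := b₃) (b := b₁)]
      have := hedge x y h; tauto
  omega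

end Prism

section Pyramid
variable {H : SimpleGraph W}

lemma nonempty_embedding_of_cover {X Y ι : Type} {C : SimpleGraph Y} {K : SimpleGraph X}
    (φ : ι → C ↪g K) (hφ : ∀ x y, ∃ i s t, φ i s = x ∧ φ i t = y) (F : X → W)
    (hF : ∀ i, ∃ e : C ↪g H, ∀ s, e s = F (φ i s)) : Nonempty (K ↪g H) := by
  choose e he using hF
  refine ⟨⟨⟨F, fun x y hxy => ?_⟩, fun {x y} => ?_⟩⟩
  · obtain ⟨i, s, t, rfl, rfl⟩ := hφ x y
    rw [← he, ← he] at hxy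
    rw [(e i).injective hxy]
  · obtain ⟨i, s, t, rfl, rfl⟩ := hφ x y
    change H.Adj (F _) (F _) ↔ _
    rw [← he, ← he, (e i).map_adj_iff, (φ i).map_adj_iff]

/-- The hole `a bᵢ cᵢ cⱼ bⱼ`. Every two vertices of the 3-pentagon lie on one of the three with
`i < j`, so a map that embeds these three holes embeds the whole pentagon. -/
def pentagonCycle (i j : Fin 3) : ZMod 5 → Unit ⊕ Fin 3 ⊕ Fin 3 :=
  ![.inl (), .inr (.inl i), .inr (.inr i), .inr (.inr j), .inr (.inl j)]

lemma pentagonCycle_injective : ∀ i j : Fin 3, i ≠ j → ∀ s t : ZMod 5,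
    pentagonCycle i j s = pentagonCycle i j t → s = t := by
  decide

lemma pentagonCycle_adj_iff : ∀ i j : Fin 3, i ≠ j → ∀ s t : ZMod 5,
    (pentagon 3).Adj (pentagonCycle i j s) (pentagonCycle i j t) ↔ (cycleG 5).Adj s t := by
  decide

lemma exists_pentagonCycle_eq : ∀ x y : Unit ⊕ Fin 3 ⊕ Fin 3, ∃ i j : Fin 3, i < j ∧
    ∃ s t : ZMod 5, pentagonCycle i j s = x ∧ pentagonCycle i j t = y := by
  decide

lemma nonempty_pentagon_embedding {a : W} {b c : Fin 3 → W}
    (hC5 : ∀ i j, i < j → ∃ e : cycleG 5 ↪g H, ⇑e = ![a, b i, c i, c j, b j]) :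
    Nonempty (pentagon 3 ↪g H) := by
  let φ (ij : {ij : Fin 3 × Fin 3 // ij.1 < ij.2}) : cycleG 5 ↪g pentagon 3 :=
    ⟨⟨pentagonCycle ij.1.1 ij.1.2, fun s t => pentagonCycle_injective _ _ ij.2.ne s t⟩,
      pentagonCycle_adj_iff _ _ ij.2.ne _ _⟩
  refine nonempty_embedding_of_cover φ (fun x y => ?_) (Sum.elim (fun _ => a) (Sum.elim b c))
    fun ⟨(i, j), hij⟩ => ?_
  · obtain ⟨i, j, hij, s, t, hs, ht⟩ := exists_pentagonCycle_eq x y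
    exact ⟨⟨(i, j), hij⟩, s, t, hs, ht⟩
  · obtain ⟨e, he⟩ := hC5 i j hij
    exact ⟨e, fun s => by rw [he]; fin_cases s <;> rfl⟩

lemma exists_cycleG_embedding_of_pyramid {a b₁ b₂ b₃ : W}
    {P : H.Walk a b₁} {Q : H.Walk a b₂} {R : H.Walk a b₃}
    (hb₁₂ : H.Adj b₁ b₂) (hP : P.IsPath) (hQ : Q.IsPath) (hR : R.IsPath)
    (hP1 : 1 ≤ P.length) (hQ1 : 1 ≤ Q.length) (hR1 : 1 ≤ R.length)
    (hPQ : ∀ v, v ∈ P.support → v ∈ Q.support → v = a)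
    (hPR : ∀ v, v ∈ P.support → v ∈ R.support → v = a)
    (hQR : ∀ v, v ∈ Q.support → v ∈ R.support → v = a)
    (hedge : ∀ x y, H.Adj x y → s(x, y) ∈ P.edges ∨ s(x, y) ∈ Q.edges ∨ s(x, y) ∈ R.edges ∨
      s(x, y) = s(b₁, b₂) ∨ s(x, y) = s(b₁, b₃) ∨ s(x, y) = s(b₂, b₃))
    {m : ℕ} (hm : P.length + 1 + Q.length = m) :
    ∃ e : cycleG m ↪g H, ∀ k, e k = ((P.concat hb₁₂).append Q.reverse).getVert k.val := by
  have hp := hP.concat (fun h => hQ.end_ne_start hQ1 (hPQ b₂ h Q.end_mem_support)) hb₁₂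
  refine exists_cycleG_embedding_of_isPath hp hQ ?_ (by simp only [Walk.length_concat]; omega)
    ?_ (by simpa using hm)
  · simp only [Walk.support_concat, List.mem_append, List.mem_cons, List.not_mem_nil, or_false]
    rintro x (hx | rfl) hxQ
    exacts [Or.inl (hPQ x hx hxQ), Or.inr rfl]
  · simp only [Walk.support_concat, Walk.edges_concat, List.concat_eq_append, List.mem_append,
      List.mem_cons, List.not_mem_nil, or_false]
    have hRa : ∀ z, (z ∈ P.support ∨ z = b₂) ∨ z ∈ Q.support → z ∈ R.support → z = a := by
      rintro z ((h | rfl) | h) hzR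
      exacts [hPR z h hzR, hQR z Q.end_mem_support hzR, hQR z h hzR]
    intro x y hx hy hxy
    have hRxy : ∀ c ∈ R.support, c ∈ s(x, y) → c = a := by
      intro c hcR hc
      rcases Sym2.mem_iff.mp hc with rfl | rfl
      exacts [hRa c hx hcR, hRa c hy hcR]
    have hb₃ : b₃ ∉ s(x, y) := fun h => hR.end_ne_start hR1 (hRxy b₃ R.end_mem_support h)
    rcases hedge x y hxy with h | h | h | h | h | h
    · exact Or.inl (Or.inl h)
    · exact Or.inr h
    · exact (hxy.ne ((hRxy x (R.fst_mem_support_of_mem_edges h) (Sym2.mem_mk_left _ _)).trans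
        (hRxy y (R.snd_mem_support_of_mem_edges h) (Sym2.mem_mk_right _ _)).symm)).elim
    · exact Or.inl (Or.inr h)
    · exact (hb₃ (h ▸ Sym2.mem_mk_right _ _)).elim
    · exact (hb₃ (h ▸ Sym2.mem_mk_right _ _)).elim

lemma getVert_concat_append_reverse {a b b' : W} {P : H.Walk a b} {Q : H.Walk a b'}
    (h : H.Adj b b') (hP : P.length = 2) (hQ : Q.length = 2) :
    (fun k : ZMod 5 => ((P.concat h).append Q.reverse).getVert k.val) =
      ![a, P.getVert 1, b, b', Q.getVert 1] := by
  funext k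
  fin_cases k <;>
    simp [ZMod.val, Walk.getVert_append, Walk.getVert_reverse, Walk.concat_eq_append, hP, hQ]

theorem not_isPyramid (hH : HolesHaveLengthFive H) (hpent : IndFree H (pentagon 3)) :
    ¬ IsPyramid H := by
  rintro ⟨a, b₁, b₂, b₃, P₁, P₂, P₃, h₁₂, h₁₃, h₂₃, hP₁, hP₂, hP₃, hl₁, hl₂, hl₃, hlong,
    hd₁₂, hd₁₃, hd₂₃, -, hedge⟩
  have hole₁₂ {m} := exists_cycleG_embedding_of_pyramid (m := m) h₁₂ hP₁ hP₂ hP₃ hl₁ hl₂ hl₃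
    hd₁₂ hd₁₃ hd₂₃ hedge
  have hole₁₃ {m} := exists_cycleG_embedding_of_pyramid (m := m) h₁₃ hP₁ hP₃ hP₂ hl₁ hl₃ hl₂
    hd₁₃ hd₁₂ (fun v h₃ h₂ => hd₂₃ v h₂ h₃) fun x y h => by
      rw [Sym2.eq_swap (a := b₃) (b := b₂)]; have := hedge x y h; tauto
  have hole₂₃ {m} := exists_cycleG_embedding_of_pyramid (m := m) h₂₃ hP₂ hP₃ hP₁ hl₂ hl₃ hl₁
    hd₂₃ (fun v h₂ h₁ => hd₁₂ v h₁ h₂) (fun v h₃ h₁ => hd₁₃ v h₁ h₃) fun x y h => by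
      rw [Sym2.eq_swap (a := b₂) (b := b₁), Sym2.eq_swap (a := b₃) (b := b₁)]
      have := hedge x y h; tauto
  have := hH (by omega) (hole₁₂ rfl).choose
  have := hH (by omega) (hole₁₃ rfl).choose
  have := hH (by omega) (hole₂₃ rfl).choose
  obtain ⟨e₁₂, he₁₂⟩ := hole₁₂ (m := 5) (by omega)
  obtain ⟨e₁₃, he₁₃⟩ := hole₁₃ (m := 5) (by omega)
  obtain ⟨e₂₃, he₂₃⟩ := hole₂₃ (m := 5) (by omega)
  refine hpent.elim (nonempty_pentagon_embedding (a := a)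
    (b := ![P₁.getVert 1, P₂.getVert 1, P₃.getVert 1]) (c := ![b₁, b₂, b₃]) ?_).some
  intro i j hij
  fin_cases i <;> fin_cases j <;> simp at hij
  · exact ⟨e₁₂, (funext he₁₂).trans (getVert_concat_append_reverse _ (by omega) (by omega))⟩
  · exact ⟨e₁₃, (funext he₁₃).trans (getVert_concat_append_reverse _ (by omega) (by omega))⟩
  · exact ⟨e₂₃, (funext he₂₃).trans (getVert_concat_append_reverse _ (by omega) (by omega))⟩

end Pyramid

section Wheel
variable {H : SimpleGraph W}

lemma nonempty_cycleG_four_embedding {w : ZMod 4 → W} (hadj : ∀ i, H.Adj (w i) (w (i + 1)))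
    (hnadj : ∀ i, ¬ H.Adj (w i) (w (i + 2))) (hne : ∀ i, w i ≠ w (i + 2)) :
    Nonempty (cycleG 4 ↪g H) := by
  have hcases : ∀ s t : ZMod 4, t = s ∨ t = s + 1 ∨ t = s + 2 ∨ s = t + 1 := by decide
  have hcyc : ∀ s : ZMod 4, (cycleG 4).Adj s (s + 1) ∧ ¬ (cycleG 4).Adj s (s + 2) := by decide
  refine ⟨⟨⟨w, fun s t hst => ?_⟩, fun {s t} => ?_⟩⟩
  · rcases hcases s t with h | h | h | h <;> rw [h] at hst ⊢
    exacts [((hadj s).ne hst).elim, (hne s hst).elim, ((hadj t).ne hst.symm).elim]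
  · change H.Adj (w s) (w t) ↔ _
    rcases hcases s t with h | h | h | h <;> rw [h]
    · simp
    · simp [(hcyc s).1, hadj s]
    · simp [(hcyc s).2, hnadj s]
    · simp [(hcyc t).1.symm, (hadj t).symm]

theorem not_isProperWheel (hH : HolesHaveLengthFive H) : ¬ IsProperWheel H := by
  classical
  rintro ⟨v, n, e, hn, hrange, hdeg, hnuniv, hntwin⟩
  obtain rfl := hH hn e
  let T : Finset (ZMod 5) := Finset.univ.filter fun i => H.Adj v (e i)
  have hN : H.neighborSet v = e '' T := by
    ext w
    constructor
    · intro hw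
      obtain ⟨i, rfl⟩ : w ∈ Set.range e := hrange ▸ (H.ne_of_adj hw).symm
      exact ⟨i, by simpa [T] using hw, rfl⟩
    · rintro ⟨i, hi, rfl⟩
      simpa [T] using hi
  have hsubsets : ∀ T : Finset (ZMod 5), 3 ≤ T.card → T ≠ Finset.univ →
      (∀ i, T ≠ {i, i + 1, i + 2}) → ∃ i ∈ T, i + 1 ∉ T ∧ i + 2 ∈ T := by
    decide
  obtain ⟨i, hi, hi1, hi2⟩ := hsubsets T
    (by rwa [hN, Set.ncard_image_of_injective _ e.injective, Set.ncard_coe_finset] at hdeg)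
    (fun hT => hnuniv (by rw [hN, hT, Finset.coe_univ, Set.image_univ, hrange]))
    (fun j hT => hntwin ⟨j, by rw [hN, hT]; simp [Set.image_insert_eq]⟩)
  simp only [T, Finset.mem_filter, Finset.mem_univ, true_and] at hi hi1 hi2
  have hcyc : ∀ j : ZMod 5, (cycleG 5).Adj j (j + 1) ∧ (cycleG 5).Adj (j + 1) (j + 2) ∧
      ¬ (cycleG 5).Adj j (j + 2) ∧ j ≠ j + 2 := by
    decide
  obtain ⟨h₀₁, h₁₂, h₀₂, hne₀₂⟩ := hcyc i
  have hv : ∀ j, e j ≠ v := fun j h => (hrange ▸ Set.mem_range_self j : e j ∈ ({v}ᶜ : Set W)) h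
  obtain ⟨c⟩ := nonempty_cycleG_four_embedding (H := H) (w := ![v, e i, e (i + 1), e (i + 2)])
    (fun j => by
      fin_cases j
      exacts [hi, e.map_adj_iff.mpr h₀₁, e.map_adj_iff.mpr h₁₂, hi2.symm])
    (fun j => by
      fin_cases j
      exacts [hi1, mt e.map_adj_iff.mp h₀₂, fun h => hi1 h.symm,
        fun h => h₀₂ (e.map_adj_iff.mp h.symm)])
    (fun j => by
      fin_cases j
      exacts [(hv _).symm, e.injective.ne hne₀₂, hv _, (e.injective.ne hne₀₂).symm])
  exact absurd (hH le_rfl c) (by norm_num)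

end Wheel

theorem statement_11_general {V : Type} (G : SimpleGraph V)
    (hfree : IndFree G twoP3 ∧ IndFree G (cycleG 4) ∧ IndFree G (cycleG 6) ∧
      IndFree G (cycleG 7) ∧ IndFree G (pentagon 3)) :
    (∀ S : Set V, ¬ IsTheta (G.induce S)) ∧
    (∀ S : Set V, ¬ IsPyramid (G.induce S)) ∧
    (∀ S : Set V, ¬ IsPrism (G.induce S)) ∧
    (∀ S : Set V, ¬ IsProperWheel (G.induce S)) := by
  obtain ⟨h2P3, hC4, hC6, hC7, hpent⟩ := hfree
  have hH (S : Set V) : HolesHaveLengthFive (G.induce S) :=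
    holesHaveLengthFive_of_indFree (h2P3.induce S) (hC4.induce S) (hC6.induce S) (hC7.induce S)
  exact ⟨fun S => not_isTheta (hH S), fun S => not_isPyramid (hH S) (hpent.induce S),
    fun S => not_isPrism (hH S), fun S => not_isProperWheel (hH S)⟩

theorem statement_11 {V : Type} [Fintype V] (G : SimpleGraph V)
    (hfree : IndFree G twoP3 ∧ IndFree G (cycleG 4) ∧ IndFree G (cycleG 6) ∧
      IndFree G (cycleG 7) ∧ IndFree G (pentagon 3)) :
    (∀ S : Set V, ¬ IsTheta (G.induce S)) ∧
    (∀ S : Set V, ¬ IsPyramid (G.induce S)) ∧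
    (∀ S : Set V, ¬ IsPrism (G.induce S)) ∧
    (∀ S : Set V, ¬ IsProperWheel (G.induce S)) :=
  statement_11_general G hfree

end Paper
end

section
/- Let G be a graph, and let S be the set of all vertices x of G such that the subgraph of G induced by the neighborhood of x contains a stable set of size 3 (equivalently, x has three pairwise nonadjacent neighbors). If S is a clique, then G is T_0-free. -/
namespace Paper

open SimpleGraph

variable {V : Type} {W : Type}

def IsClawCenter (G : SimpleGraph V) (x : V) : Prop :=
  ∃ y z w : V, G.Adj x y ∧ G.Adj x z ∧ G.Adj x w ∧
    y ≠ z ∧ y ≠ w ∧ z ≠ w ∧ ¬ G.Adj y z ∧ ¬ G.Adj y w ∧ ¬ G.Adj z w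

def clawCenters (G : SimpleGraph V) : Set V :=
  {x | IsClawCenter G x}

theorem IsClawCenter.map {G : SimpleGraph V} {H : SimpleGraph W} (f : H ↪g G) {x : W}
    (hx : IsClawCenter H x) : IsClawCenter G (f x) := by
  obtain ⟨y, z, w, hxy, hxz, hxw, hyz, hyw, hzw, nyz, nyw, nzw⟩ := hx
  exact ⟨f y, f z, f w, f.map_adj_iff.mpr hxy, f.map_adj_iff.mpr hxz, f.map_adj_iff.mpr hxw,
    f.injective.ne hyz, f.injective.ne hyw, f.injective.ne hzw,
    mt f.map_adj_iff.mp nyz, mt f.map_adj_iff.mp nyw, mt f.map_adj_iff.mp nzw⟩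

theorem isClique_clawCenters_of_embedding {G : SimpleGraph V} {H : SimpleGraph W}
    (f : H ↪g G) (hG : G.IsClique (clawCenters G)) : H.IsClique (clawCenters H) :=
  fun _ hx _ hy hxy => f.map_adj_iff.mp (hG (hx.map f) (hy.map f) (f.injective.ne hxy))

/-- `a₀` is the centre of the claw `a₀; b₀, b₂, b₃` and `c₁` of the claw `c₁; b₀, b₁, c₂`,
but `a₀` and `c₁` are not adjacent. -/
theorem not_isClique_clawCenters_T0 : ¬ T0.IsClique (clawCenters T0) := by
  have h0 : IsClawCenter T0 0 := ⟨2, 4, 5, by simp [T0]⟩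
  have h6 : IsClawCenter T0 6 := ⟨2, 3, 7, by simp [T0]⟩
  exact fun hT => absurd (hT h0 h6 (by decide)) (by simp [T0])

theorem statement_15_general {V : Type} (G : SimpleGraph V)
    (h : G.IsClique {x : V | ∃ y z w : V, G.Adj x y ∧ G.Adj x z ∧ G.Adj x w ∧
      y ≠ z ∧ y ≠ w ∧ z ≠ w ∧ ¬ G.Adj y z ∧ ¬ G.Adj y w ∧ ¬ G.Adj z w}) :
    IndFree G T0 :=
  ⟨fun f => not_isClique_clawCenters_T0 (isClique_clawCenters_of_embedding f h)⟩

theorem statement_15 {V : Type} [Fintype V] (G : SimpleGraph V)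
    (h : G.IsClique {x : V | ∃ y z w : V, G.Adj x y ∧ G.Adj x z ∧ G.Adj x w ∧
      y ≠ z ∧ y ≠ w ∧ z ≠ w ∧ ¬ G.Adj y z ∧ ¬ G.Adj y w ∧ ¬ G.Adj z w}) :
    IndFree G T0 :=
  statement_15_general G h

end Paper
end

section
/- Let t ≥ 3 be an integer, and let Q be a t-villa with a t-villa partition (A; B_1, …, B_t; C_1, …, C_t). Then every hole in Q contains exactly one vertex of A. -/
namespace Paper

open SimpleGraph

variable {V : Type} {W : Type}

/-! A vertex of `A` is adjacent to every vertex outside `⋃ i, C i`, so two vertices of `A` on a hole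
would be consecutive, and the next vertex of the hole would be adjacent to both: a chord.
A hole avoiding `A` cannot lie in the clique `⋃ i, C i`, so it meets some `B i`; outside `A` the
neighbours of `B i` lie in the cliques `B i` and `C i`, which forces two consecutive hole vertices
`b, b'` in `B i` whose other hole neighbours lie in `C i`, one seen only by `b` and one only by `b'`.
This contradicts the nesting of the neighbourhoods of `B i` in `C i`. -/

theorem cycleG_adj_iff {n : ℕ} {u v : ZMod n} :
    (cycleG n).Adj u v ↔ u ≠ v ∧ (v = u + 1 ∨ u = v + 1) := by
  simp [cycleG, SimpleGraph.fromRel_adj]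

theorem natCast_zmod_ne_zero {n k : ℕ} (hk : 0 < k) (hkn : k < n) : (k : ZMod n) ≠ 0 := by
  rw [Ne, ZMod.natCast_eq_zero_iff]
  exact Nat.not_dvd_of_pos_of_lt hk hkn

theorem cycleG_adj_of_eq_add_one {n : ℕ} [Nontrivial (ZMod n)] {u v : ZMod n} (h : v = u + 1) :
    (cycleG n).Adj u v :=
  cycleG_adj_iff.2 ⟨fun huv => one_ne_zero (by linear_combination -h - huv), Or.inl h⟩

theorem cycleG_not_adj_of_eq_add_two {n : ℕ} (hn : 4 ≤ n) {u v : ZMod n} (h : v = u + 2) :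
    ¬ (cycleG n).Adj u v := by
  have h1 : (1 : ZMod n) ≠ 0 := by exact_mod_cast natCast_zmod_ne_zero (k := 1) one_pos (by omega)
  have h3 : (3 : ZMod n) ≠ 0 := by exact_mod_cast natCast_zmod_ne_zero (k := 3) three_pos (by omega)
  rintro ⟨-, h' | h'⟩
  · exact h1 (by linear_combination h' - h)
  · exact h3 (by linear_combination -h - h')

section Hole

variable {Q : SimpleGraph W} {n : ℕ} (e : cycleG n ↪g Q)

theorem hole_adj_of_eq_add_one [Nontrivial (ZMod n)] {u v : ZMod n} (h : v = u + 1) :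
    Q.Adj (e u) (e v) :=
  e.map_adj_iff.2 (cycleG_adj_of_eq_add_one h)

theorem hole_eq_add_one_of_adj {u v : ZMod n} (h : Q.Adj (e u) (e v)) : v = u + 1 ∨ u = v + 1 :=
  (cycleG_adj_iff.1 (e.map_adj_iff.1 h)).2

theorem hole_not_adj_of_eq_add_two (hn : 4 ≤ n) {u v : ZMod n} (h : v = u + 2) :
    ¬ Q.Adj (e u) (e v) :=
  fun hadj => cycleG_not_adj_of_eq_add_two hn h (e.map_adj_iff.1 hadj)

theorem hole_ne_of_eq_add_two (hn : 4 ≤ n) {u v : ZMod n} (h : v = u + 2) : e u ≠ e v := by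
  have h2 : (2 : ZMod n) ≠ 0 := by exact_mod_cast natCast_zmod_ne_zero (k := 2) two_pos (by omega)
  exact e.injective.ne fun huv => h2 (by linear_combination -h - huv)

theorem hole_not_mem_clique_of_eq_add_two (hn : 4 ≤ n) {S : Set W} (hS : Q.IsClique S)
    {u v : ZMod n} (h : v = u + 2) (hu : e u ∈ S) (hv : e v ∈ S) : False :=
  hole_not_adj_of_eq_add_two e hn h (hS hu hv (hole_ne_of_eq_add_two e hn h))

end Hole

namespace IsVillaPartition

variable {t : ℕ} {Q : SimpleGraph W} {A : Set W} {B C : Fin t → Set W}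

theorem mem_cases (hQ : IsVillaPartition Q A B C) (x : W) :
    x ∈ A ∨ (∃ i, x ∈ B i) ∨ ∃ i, x ∈ C i := by
  have hx : x ∈ A ∪ (⋃ i, B i) ∪ ⋃ i, C i := hQ.2 ▸ Set.mem_univ x
  simpa only [Set.mem_union, Set.mem_iUnion, or_assoc] using hx

theorem isClique_iUnion_C (hQ : IsVillaPartition Q A B C) : Q.IsClique (⋃ i, C i) := by
  obtain ⟨⟨-, -, -, -, -, -, -, hC, -, -, -, -, -, -, hCC, -⟩, -⟩ := hQ
  intro x hx y hy hxy
  obtain ⟨i, hx⟩ := Set.mem_iUnion.1 hx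
  obtain ⟨j, hy⟩ := Set.mem_iUnion.1 hy
  obtain rfl | hij := eq_or_ne i j
  · exact hC i hx hy hxy
  · exact hCC i j hij x hx y hy

theorem adj_of_mem_A_of_adj_mem_A (hQ : IsVillaPartition Q A B C) {a a' x : W} (ha : a ∈ A)
    (ha' : a' ∈ A) (hx : Q.Adj a' x) (hxa : x ≠ a) : Q.Adj a x := by
  have hcases := hQ.mem_cases x
  obtain ⟨⟨-, -, -, -, -, hA, -, -, -, -, -, hAB, hAC, -⟩, -⟩ := hQ
  rcases hcases with hxA | ⟨i, hxB⟩ | ⟨i, hxC⟩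
  · exact hA ha hxA hxa.symm
  · exact hAB i a ha x hxB
  · exact absurd hx (hAC i a' ha' x hxC)

theorem mem_B_or_C_of_adj (hQ : IsVillaPartition Q A B C) {i : Fin t} {b x : W} (hb : b ∈ B i)
    (hbx : Q.Adj b x) (hx : x ∉ A) : x ∈ B i ∨ x ∈ C i := by
  have hcases := hQ.mem_cases x
  obtain ⟨⟨-, -, -, -, -, -, -, -, -, -, -, -, -, hBB, -, hBC, -⟩, -⟩ := hQ
  rcases hcases with hxA | ⟨j, hxB⟩ | ⟨j, hxC⟩
  · exact absurd hxA hx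
  · obtain rfl | hij := eq_or_ne i j
    · exact Or.inl hxB
    · exact absurd hbx (hBB i j hij b hb x hxB)
  · obtain rfl | hij := eq_or_ne i j
    · exact Or.inr hxC
    · exact absurd hbx (hBC i j hij b hb x hxC)

theorem mem_C_of_adj_of_not_adj (hQ : IsVillaPartition Q A B C) {i : Fin t} {b b' x : W}
    (hb : b ∈ B i) (hb' : b' ∈ B i) (hx : x ∉ A) (hbx : Q.Adj b x) (hb'x : ¬ Q.Adj b' x)
    (hxb' : x ≠ b') : x ∈ C i := by
  have hBC := hQ.mem_B_or_C_of_adj hb hbx hx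
  obtain ⟨⟨-, -, -, -, -, -, hB, -⟩, -⟩ := hQ
  exact hBC.resolve_left fun hxB => hb'x (hB i hb' hxB hxb'.symm)

theorem adj_of_adj_of_not_adj (hQ : IsVillaPartition Q A B C) {i : Fin t} {b b' x y : W}
    (hb : b ∈ B i) (hb' : b' ∈ B i) (hx : x ∈ C i) (hy : y ∈ C i)
    (hbx : Q.Adj b x) (hb'x : ¬ Q.Adj b' x) (hb'y : Q.Adj b' y) : Q.Adj b y := by
  obtain ⟨⟨-, -, -, -, -, -, -, -, -, -, -, -, -, -, -, -, hnested, -⟩, -⟩ := hQ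
  rcases hnested i b hb b' hb' with hsub | hsub
  · exact absurd (hsub ⟨hbx, hx⟩).1 hb'x
  · exact (hsub ⟨hb'y, hy⟩).1

section Hole

variable {n : ℕ} (e : cycleG n ↪g Q)

theorem hole_eq_of_mem_A (hQ : IsVillaPartition Q A B C) (hn : 4 ≤ n) {u v : ZMod n}
    (hu : e u ∈ A) (hv : e v ∈ A) : u = v := by
  have := ZMod.nontrivial_iff.2 (by omega : n ≠ 1)
  have not_consecutive : ∀ w, e w ∈ A → e (w + 1) ∈ A → False := fun w hw hw1 =>
    hole_not_adj_of_eq_add_two e hn rfl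
      (hQ.adj_of_mem_A_of_adj_mem_A hw hw1 (hole_adj_of_eq_add_one e (by ring))
        (hole_ne_of_eq_add_two e hn rfl).symm)
  obtain ⟨⟨-, -, -, -, -, hA, -⟩, -⟩ := hQ
  by_contra huv
  rcases hole_eq_add_one_of_adj e (hA hu hv (e.injective.ne huv)) with rfl | rfl
  · exact not_consecutive u hu hv
  · exact not_consecutive v hv hu

theorem hole_not_consecutive_mem_B (hQ : IsVillaPartition Q A B C) (hn : 4 ≤ n)
    (hA : ∀ u, e u ∉ A) {i : Fin t} {v : ZMod n} (hv : e v ∈ B i) (hv1 : e (v + 1) ∈ B i) :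
    False := by
  have := ZMod.nontrivial_iff.2 (by omega : n ≠ 1)
  have hprev_adj : Q.Adj (e v) (e (v - 1)) := (hole_adj_of_eq_add_one e (by ring)).symm
  have hprev_not_adj : ¬ Q.Adj (e (v + 1)) (e (v - 1)) :=
    fun h => hole_not_adj_of_eq_add_two e hn (by ring) h.symm
  have hnext_adj : Q.Adj (e (v + 1)) (e (v + 2)) := hole_adj_of_eq_add_one e (by ring)
  have hprev : e (v - 1) ∈ C i := hQ.mem_C_of_adj_of_not_adj hv hv1 (hA _) hprev_adj
    hprev_not_adj (hole_ne_of_eq_add_two e hn (by ring))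
  have hnext : e (v + 2) ∈ C i := hQ.mem_C_of_adj_of_not_adj hv1 hv (hA _) hnext_adj
    (hole_not_adj_of_eq_add_two e hn rfl) (hole_ne_of_eq_add_two e hn rfl).symm
  exact hole_not_adj_of_eq_add_two e hn rfl
    (hQ.adj_of_adj_of_not_adj hv hv1 hprev hnext hprev_adj hprev_not_adj hnext_adj)

theorem hole_exists_mem_A (hQ : IsVillaPartition Q A B C) (hn : 4 ≤ n) : ∃ u, e u ∈ A := by
  have := ZMod.nontrivial_iff.2 (by omega : n ≠ 1)
  by_contra! hA
  obtain ⟨u, i, hu⟩ : ∃ u i, e u ∈ B i := by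
    by_contra! hB
    have hC : ∀ u, e u ∈ ⋃ i, C i := fun u =>
      Set.mem_iUnion.2 (((hQ.mem_cases (e u)).resolve_left (hA u)).resolve_left
        fun ⟨i, h⟩ => hB u i h)
    exact hole_not_mem_clique_of_eq_add_two e hn hQ.isClique_iUnion_C (u := 0) (v := 2)
      (by ring) (hC 0) (hC 2)
  rcases hQ.mem_B_or_C_of_adj hu (hole_adj_of_eq_add_one e (u := u - 1) (by ring)).symm (hA _)
    with hprev | hprev
  · exact hole_not_consecutive_mem_B e hQ hn hA hprev (by rwa [sub_add_cancel])
  rcases hQ.mem_B_or_C_of_adj hu (hole_adj_of_eq_add_one e rfl) (hA _) with hnext | hnext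
  · exact hole_not_consecutive_mem_B e hQ hn hA hu hnext
  · exact hole_not_mem_clique_of_eq_add_two e hn hQ.isClique_iUnion_C (by ring)
      (Set.mem_iUnion_of_mem i hprev) (Set.mem_iUnion_of_mem i hnext)

end Hole

end IsVillaPartition

theorem statement_17_general {W : Type} (t : ℕ)
    (Q : SimpleGraph W) (A : Set W) (B C : Fin t → Set W)
    (hQ : IsVillaPartition Q A B C) :
    ∀ (n : ℕ), 4 ≤ n → ∀ e : cycleG n ↪g Q, ∃! v, v ∈ A ∧ v ∈ Set.range ⇑e := by
  intro n hn e
  obtain ⟨u, hu⟩ := hQ.hole_exists_mem_A e hn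
  refine ⟨e u, ⟨hu, u, rfl⟩, ?_⟩
  rintro _ ⟨hvA, v, rfl⟩
  rw [hQ.hole_eq_of_mem_A e hn hvA hu]

theorem statement_17 {W : Type} [Fintype W] (t : ℕ) (ht : 3 ≤ t)
    (Q : SimpleGraph W) (A : Set W) (B C : Fin t → Set W)
    (hQ : IsVillaPartition Q A B C) :
    ∀ (n : ℕ), 4 ≤ n → ∀ e : cycleG n ↪g Q, ∃! v, v ∈ A ∧ v ∈ Set.range ⇑e :=
  statement_17_general t Q A B C hQ

end Paper
end
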